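/- arXiv:2510.13305 — 8 statements merged into one kernel-verified Lean document; each statement's English description precedes it below -/
import Mathlib

section
/- Let f : ℂ → ℂ be an entire function with f(0) = 0 and f'(0) = 1 which is not identically equal to the identity. Then it is not the case that every z ∈ ℂ \ {0} satisfies both: fⁿ(z) ≠ 0 for all n ∈ ℕ, and fⁿ(z) → 0 as n → ∞. (In other words, the parabolic basin of 0 is never all of ℂ*.) -/
/-!
Write `f z = z + z ^ (m + 1) * φ z` near `0` with `m ≥ 1` and `φ 0 ≠ 0`. In the approximate Fatou
coordinate `w = -1 / (c z ^ m)`, `c = m φ 0`, the map `f` becomes `w ↦ w + 1 + o(1)`, so on the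
half-plane `Re w > R` (an attracting petal, for `R` large) the real part of `w` grows by at least
`1/2` per step and the iterates of `f` tend to `0` uniformly. An orbit that tends to `0` without
hitting it eventually enters this open petal; if this happened for every point of the unit circle,
compactness would give one iterate `f^[N]` with `‖f^[N]‖ ≤ 1/2` on the circle, and Cauchy's
estimate would contradict `(f^[N])' 0 = 1`.
-/

open Filter Topology Metric Set

theorem add_mul_le_iterate {α : Type*} {f : α → α} {g : α → ℝ} {s : Set α} {b : ℝ}
    (hg : ∀ y ∈ s, g y + b ≤ g (f y)) {z : α} (hz : ∀ k, f^[k] z ∈ s) (n : ℕ) :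
    g z + n * b ≤ g (f^[n] z) := by
  induction n with
  | zero => simp
  | succ n ih =>
    rw [Function.iterate_succ_apply']
    push_cast
    linarith [hg _ (hz n)]

theorem TendstoUniformlyOn.iterate_of_isCompact {X : Type*} [UniformSpace X] {f : X → X}
    {P K : Set X} {a : X} (hP : TendstoUniformlyOn (fun n => f^[n]) (fun _ => a) atTop P)
    (hf : Continuous f) (hPo : IsOpen P) (hK : IsCompact K) (hKP : ∀ z ∈ K, ∃ n, f^[n] z ∈ P) :
    TendstoUniformlyOn (fun n => f^[n]) (fun _ => a) atTop K := by
  obtain ⟨T, hT⟩ := hK.elim_finite_subcover (fun n => f^[n] ⁻¹' P)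
    (fun n => hPo.preimage (hf.iterate n)) fun z hz => mem_iUnion.2 (hKP z hz)
  intro u hu
  obtain ⟨N, hN⟩ := eventually_atTop.1 (hP u hu)
  refine eventually_atTop.2 ⟨T.sup id + N, fun k hk z hz => ?_⟩
  obtain ⟨n, hnT, hn⟩ := mem_iUnion₂.1 (hT hz)
  have : n ≤ T.sup id := Finset.le_sup (f := id) hnT
  show (a, f^[k] z) ∈ u
  rw [show k = (k - n) + n by omega, Function.iterate_add_apply]
  exact hN _ (by omega) _ hn

section Parabolic

variable {𝕜 : Type*} [NontriviallyNormedField 𝕜] {f φ : 𝕜 → 𝕜} {m : ℕ}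

theorem AnalyticAt.exists_eventuallyEq_add_pow_mul [CharZero 𝕜] [CompleteSpace 𝕜]
    (hf : AnalyticAt 𝕜 f 0) (h0 : f 0 = 0) (h1 : deriv f 0 = 1) (hid : ¬ f =ᶠ[𝓝 0] id) :
    ∃ m ≠ 0, ∃ φ : 𝕜 → 𝕜, AnalyticAt 𝕜 φ 0 ∧ φ 0 ≠ 0 ∧
      ∀ᶠ z in 𝓝 0, f z = z + z ^ (m + 1) * φ z := by
  set g : 𝕜 → 𝕜 := fun z => f z - z
  have hg : AnalyticAt 𝕜 g 0 := hf.sub analyticAt_id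
  have hg_deriv : deriv g 0 = 0 := by
    rw [deriv_fun_sub hf.differentiableAt differentiableAt_fun_id, h1, deriv_id'', sub_self]
  have htwo : (2 : ℕ) ≤ analyticOrderAt g 0 := by
    rw [natCast_le_analyticOrderAt_iff_iteratedDeriv_eq_zero hg]
    intro i hi
    interval_cases i
    · simp [g, h0]
    · simpa using hg_deriv
  have hfin : analyticOrderAt g 0 ≠ ⊤ := by
    rw [Ne, analyticOrderAt_eq_top]
    exact fun h => hid (h.mono fun z hz => sub_eq_zero.1 hz)
  obtain ⟨k, hk⟩ := ENat.ne_top_iff_exists.1 hfin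
  obtain ⟨φ, hφ, hφ0, hgφ⟩ := hg.analyticOrderAt_eq_natCast.1 hk.symm
  have hk2 : 2 ≤ k := by exact_mod_cast hk ▸ htwo
  refine ⟨k - 1, by omega, φ, hφ, hφ0, hgφ.mono fun z hz => ?_⟩
  rw [Nat.sub_add_cancel (by omega)]
  simp only [g, sub_zero, smul_eq_mul] at hz
  linear_combination hz

theorem eventually_eq_mul_one_add_pow_mul (hm : m ≠ 0) (hφ : ContinuousAt φ 0)
    (hf : ∀ᶠ z in 𝓝 0, f z = z + z ^ (m + 1) * φ z) :
    ∀ᶠ z in 𝓝 0, f z = z * (1 + z ^ m * φ z) ∧ 1 + z ^ m * φ z ≠ 0 := by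
  have hlim : Tendsto (fun z => 1 + z ^ m * φ z) (𝓝 0) (𝓝 1) := by
    have : ContinuousAt (fun z => 1 + z ^ m * φ z) 0 := by fun_prop
    simpa [zero_pow hm] using this.tendsto
  filter_upwards [hf, hlim.eventually_ne one_ne_zero] with z hfz hne
  exact ⟨by rw [hfz]; ring, hne⟩

def fatouCoord {𝕜 : Type*} [Field 𝕜] (c : 𝕜) (m : ℕ) (z : 𝕜) : 𝕜 := -(c * z ^ m)⁻¹

theorem tendsto_fatouCoord_sub [CharZero 𝕜] (hm : m ≠ 0) (hφ : ContinuousAt φ 0)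
    (hφ0 : φ 0 ≠ 0) (hf : ∀ᶠ z in 𝓝 0, f z = z + z ^ (m + 1) * φ z) :
    Tendsto (fun z => fatouCoord (m * φ 0) m (f z) - fatouCoord (m * φ 0) m z)
      (𝓝[≠] 0) (𝓝 1) := by
  set c : 𝕜 := m * φ 0
  have hc : c ≠ 0 := mul_ne_zero (Nat.cast_ne_zero.2 hm) hφ0
  set h : 𝕜 → 𝕜 := fun s => (∑ j ∈ Finset.range m, (1 + s) ^ j) / (1 + s) ^ m
  have hh : ContinuousAt h 0 := by fun_prop (disch := simp)
  have hlim : Tendsto (fun z => φ z / c * h (z ^ m * φ z)) (𝓝 0) (𝓝 1) := by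
    have : ContinuousAt (fun z => φ z / c * h (z ^ m * φ z)) 0 :=
      (hφ.div_const c).mul (hh.comp_of_eq (by fun_prop) (by simp [zero_pow hm]))
    convert this.tendsto using 2
    simp [h, c, zero_pow hm]
    field_simp
  refine (hlim.mono_left nhdsWithin_le_nhds).congr' ?_
  filter_upwards [nhdsWithin_le_nhds (eventually_eq_mul_one_add_pow_mul hm hφ hf),
    self_mem_nhdsWithin] with z ⟨hfz, hne⟩ hz
  have hgeom := geom_sum_mul (1 + z ^ m * φ z) m
  have hz : z ≠ 0 := hz
  simp only [fatouCoord, hfz, h, mul_pow]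
  generalize hu : 1 + z ^ m * φ z = u at hne hgeom ⊢
  field_simp
  linear_combination hgeom + (∑ j ∈ Finset.range m, u ^ j) * hu

end Parabolic

theorem norm_fatouCoord (c : ℂ) (m : ℕ) (z : ℂ) : ‖fatouCoord c m z‖ = (‖c‖ * ‖z‖ ^ m)⁻¹ := by
  simp [fatouCoord]

theorem norm_lt_of_lt_re_fatouCoord {c : ℂ} (hc : c ≠ 0) {m : ℕ} {ε : ℝ} (hε : 0 < ε) {z : ℂ}
    (h : (‖c‖ * ε ^ m)⁻¹ < (fatouCoord c m z).re) : ‖z‖ < ε := by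
  by_contra! hz
  have : (fatouCoord c m z).re ≤ (‖c‖ * ε ^ m)⁻¹ := calc
    _ ≤ ‖fatouCoord c m z‖ := Complex.re_le_norm _
    _ = (‖c‖ * ‖z‖ ^ m)⁻¹ := norm_fatouCoord c m z
    _ ≤ (‖c‖ * ε ^ m)⁻¹ := by gcongr
  linarith

theorem exists_re_fatouCoord_add_half_le {f φ : ℂ → ℂ} {m : ℕ} (hm : m ≠ 0)
    (hφ : ContinuousAt φ 0) (hφ0 : φ 0 ≠ 0) (hf : ∀ᶠ z in 𝓝 0, f z = z + z ^ (m + 1) * φ z) :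
    ∃ δ > 0, ∀ z : ℂ, z ≠ 0 → ‖z‖ < δ →
      f z ≠ 0 ∧ (fatouCoord (m * φ 0) m z).re + 1 / 2 ≤ (fatouCoord (m * φ 0) m (f z)).re := by
  have hne : ∀ᶠ z in 𝓝[≠] 0, f z ≠ 0 := by
    filter_upwards [nhdsWithin_le_nhds (eventually_eq_mul_one_add_pow_mul hm hφ hf),
      self_mem_nhdsWithin] with z ⟨hfz, hu⟩ hz
    rw [hfz]
    exact mul_ne_zero hz hu
  have hclose := (tendsto_fatouCoord_sub hm hφ hφ0 hf).eventually (ball_mem_nhds 1 one_half_pos)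
  obtain ⟨δ, hδ, hball⟩ :=
    Metric.eventually_nhds_iff.1 (eventually_nhdsWithin_iff.1 (hne.and hclose))
  refine ⟨δ, hδ, fun z hz hzδ => ?_⟩
  obtain ⟨hfz, hdist⟩ := hball (by simpa using hzδ) hz
  refine ⟨hfz, ?_⟩
  have := (abs_le.1 ((Complex.abs_re_le_norm _).trans (mem_ball_iff_norm.1 hdist).le)).1
  simp only [Complex.sub_re, Complex.one_re] at this
  linarith

def fatouPetal (c : ℂ) (m : ℕ) (R : ℝ) : Set ℂ := {z | z ≠ 0 ∧ R < (fatouCoord c m z).re}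

theorem isOpen_fatouPetal {c : ℂ} (hc : c ≠ 0) (m : ℕ) (R : ℝ) : IsOpen (fatouPetal c m R) := by
  have : ContinuousOn (fun z => (fatouCoord c m z).re) {z | z ≠ 0} :=
    Complex.continuous_re.comp_continuousOn
      ((continuousOn_const.mul (continuous_pow m).continuousOn).inv₀
        fun z hz => mul_ne_zero hc (pow_ne_zero m hz)).neg
  exact this.isOpen_inter_preimage isOpen_ne isOpen_Ioi

section Petal

variable {f : ℂ → ℂ} {c : ℂ} {m : ℕ} {δ : ℝ}

theorem mapsTo_fatouPetal (hc : c ≠ 0) (hδ : 0 < δ)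
    (hstep : ∀ z : ℂ, z ≠ 0 → ‖z‖ < δ →
      f z ≠ 0 ∧ (fatouCoord c m z).re + 1 / 2 ≤ (fatouCoord c m (f z)).re) :
    MapsTo f (fatouPetal c m (‖c‖ * δ ^ m)⁻¹) (fatouPetal c m (‖c‖ * δ ^ m)⁻¹) := by
  rintro z ⟨hz, hR⟩
  obtain ⟨hfz, hle⟩ := hstep z hz (norm_lt_of_lt_re_fatouCoord hc hδ hR)
  exact ⟨hfz, by linarith⟩

theorem tendstoUniformlyOn_iterate_fatouPetal (hc : c ≠ 0) (hδ : 0 < δ)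
    (hstep : ∀ z : ℂ, z ≠ 0 → ‖z‖ < δ →
      f z ≠ 0 ∧ (fatouCoord c m z).re + 1 / 2 ≤ (fatouCoord c m (f z)).re) :
    TendstoUniformlyOn (fun n => f^[n]) (fun _ => 0) atTop
      (fatouPetal c m (‖c‖ * δ ^ m)⁻¹) := by
  have hmaps := mapsTo_fatouPetal hc hδ hstep
  rw [Metric.tendstoUniformlyOn_iff]
  intro ε hε
  obtain ⟨n₀, hn₀⟩ := exists_nat_gt (2 * (‖c‖ * ε ^ m)⁻¹)
  filter_upwards [eventually_ge_atTop n₀] with n hn z hz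
  have hgrow := add_mul_le_iterate (g := fun z => (fatouCoord c m z).re)
    (fun y hy => (hstep y hy.1 (norm_lt_of_lt_re_fatouCoord hc hδ hy.2)).2)
    (fun k => hmaps.iterate k hz) n
  have hzR : (‖c‖ * δ ^ m)⁻¹ < (fatouCoord c m z).re := hz.2
  have hR : 0 < (‖c‖ * δ ^ m)⁻¹ := by positivity
  have : (n₀ : ℝ) ≤ n := by exact_mod_cast hn
  rw [dist_zero_left]
  refine norm_lt_of_lt_re_fatouCoord (m := m) hc hε ?_
  linarith only [hgrow, hzR, hR, this, hn₀]

theorem exists_iterate_mem_fatouPetal (hδ : 0 < δ)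
    (hstep : ∀ z : ℂ, z ≠ 0 → ‖z‖ < δ →
      f z ≠ 0 ∧ (fatouCoord c m z).re + 1 / 2 ≤ (fatouCoord c m (f z)).re)
    (R : ℝ) {z : ℂ} (hz : ∀ n, f^[n] z ≠ 0) (hlim : Tendsto (fun n => f^[n] z) atTop (𝓝 0)) :
    ∃ n, f^[n] z ∈ fatouPetal c m R := by
  obtain ⟨N, hN⟩ := eventually_atTop.1 (hlim.eventually (ball_mem_nhds 0 hδ))
  have hgrow := add_mul_le_iterate (s := {y | y ≠ 0 ∧ ‖y‖ < δ})
    (g := fun z => (fatouCoord c m z).re) (fun y hy => (hstep y hy.1 hy.2).2) (z := f^[N] z)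
    (fun k => by
      rw [← Function.iterate_add_apply]
      exact ⟨hz _, by simpa using hN (k + N) (by omega)⟩)
  obtain ⟨j, hj⟩ := exists_nat_gt (2 * (R - (fatouCoord c m (f^[N] z)).re))
  refine ⟨j + N, hz _, ?_⟩
  rw [Function.iterate_add_apply]
  linarith [hgrow j]

end Petal

/-- Let `f : ℂ → ℂ` be entire with `f 0 = 0`, `f' 0 = 1`, not identically
the identity. Then the parabolic basin of `0` is never all of `ℂ*`: it is not the case
that every `z ≠ 0` satisfies `fⁿ(z) ≠ 0` for all `n` and `fⁿ(z) → 0`. -/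
theorem stmt_0 (f : ℂ → ℂ) (hf : Differentiable ℂ f) (h0 : f 0 = 0)
    (h1 : deriv f 0 = 1) (hne : ∃ z : ℂ, f z ≠ z) :
    ¬ (∀ z : ℂ, z ≠ 0 →
        (∀ n : ℕ, f^[n] z ≠ 0) ∧
        Filter.Tendsto (fun n => f^[n] z) Filter.atTop (nhds 0)) := by
  intro hbasin
  have hid : ¬ f =ᶠ[𝓝 0] id := fun h => by
    obtain ⟨z, hz⟩ := hne
    exact hz (congrFun (AnalyticOnNhd.eq_of_eventuallyEq (fun z _ => hf.analyticAt z)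
      analyticOnNhd_id h) z)
  obtain ⟨m, hm, φ, hφ, hφ0, hfφ⟩ := (hf.analyticAt 0).exists_eventuallyEq_add_pow_mul h0 h1 hid
  have hc : (m * φ 0 : ℂ) ≠ 0 := mul_ne_zero (Nat.cast_ne_zero.2 hm) hφ0
  obtain ⟨δ, hδ, hstep⟩ := exists_re_fatouCoord_add_half_le hm hφ.continuousAt hφ0 hfφ
  have hsphere : TendstoUniformlyOn (fun n => f^[n]) (fun _ => 0) atTop (sphere (0 : ℂ) 1) :=
    (tendstoUniformlyOn_iterate_fatouPetal hc hδ hstep).iterate_of_isCompact hf.continuous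
      (isOpen_fatouPetal hc m _) (isCompact_sphere 0 1) fun z hz =>
        have hz0 := ne_zero_of_mem_sphere one_ne_zero ⟨z, hz⟩
        exists_iterate_mem_fatouPetal hδ hstep _ (hbasin z hz0).1 (hbasin z hz0).2
  obtain ⟨N, hN⟩ := (Metric.tendstoUniformlyOn_iff.1 hsphere (1 / 2) one_half_pos).exists
  have hderiv : deriv (f^[N]) 0 = 1 := by
    simpa [h1] using ((hf 0).hasDerivAt.iterate 0 h0 N).deriv
  have hcauchy := Complex.norm_deriv_le_of_forall_mem_sphere_norm_le one_pos
    (hf.iterate N).diffContOnCl fun z hz => by simpa using (hN z hz).le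
  norm_num [hderiv] at hcauchy
end

section
/- Let X ⊆ ℂ be open, f : X → ℂ holomorphic, V ⊆ ℂ open, y ∈ V, and ψ : V → 𝔻 a biholomorphism (bijective holomorphic map with holomorphic inverse) onto the open unit disk 𝔻 with ψ(y) = 0. Let U be a connected component of f⁻¹(V). Suppose that either (a) there exist an integer k ≥ 1 and a biholomorphism φ : U → 𝔻 \ {0} such that ψ(f(z)) = φ(z)^k for all z ∈ U, or (b) there exists a biholomorphism φ : U → { w ∈ ℂ : Re w < 0 } such that ψ(f(z)) = exp(φ(z)) for all z ∈ U. Then y is an asymptotic value of f : X → ℂ. -/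
open Set Filter Topology

/-- `φ` is a biholomorphism from `U` onto `V`: holomorphic bijection with
holomorphic inverse. -/
def Biholo (φ : ℂ → ℂ) (U V : Set ℂ) : Prop :=
  DifferentiableOn ℂ φ U ∧ Set.BijOn φ U V ∧
    ∃ φ' : ℂ → ℂ, DifferentiableOn ℂ φ' V ∧ Set.InvOn φ' φ U V

/-- `y` is an asymptotic value of `f : X → ℂ`. -/
def IsAsympVal (f : ℂ → ℂ) (X : Set ℂ) (y : ℂ) : Prop :=
  ∃ γ : ℝ → ℂ,
    ContinuousOn γ (Set.Ico 0 1) ∧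
    (∀ t ∈ Set.Ico (0:ℝ) 1, γ t ∈ X) ∧
    (∀ K : Set ℂ, K ⊆ X → IsCompact K →
      ∃ t₀ ∈ Set.Ico (0:ℝ) 1, ∀ t, t₀ ≤ t → t < 1 → γ t ∉ K) ∧
    Filter.Tendsto (fun t => f (γ t)) (nhdsWithin 1 (Set.Ico 0 1)) (nhds y)

lemma neBot_aux : (nhdsWithin (1:ℝ) (Set.Ico 0 1)).NeBot := by
  apply mem_closure_iff_nhdsWithin_neBot.mp
  rw [closure_Ico (by norm_num : (0:ℝ) ≠ 1)]
  constructor <;> norm_num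

lemma key_lemma (X : Set ℂ) (hX : IsOpen X) (f : ℂ → ℂ)
    (hf : DifferentiableOn ℂ f X)
    (V : Set ℂ) (hV : IsOpen V) (y : ℂ) (hy : y ∈ V)
    (ψ : ℂ → ℂ) (hψ : Biholo ψ V (Metric.ball (0:ℂ) 1)) (hψy : ψ y = 0)
    (U : Set ℂ)
    (hU : ∃ x ∈ {z ∈ X | f z ∈ V}, U = connectedComponentIn {z ∈ X | f z ∈ V} x)
    (γ : ℝ → ℂ) (hγc : ContinuousOn γ (Set.Ico 0 1))
    (hγU : ∀ t ∈ Set.Ico (0:ℝ) 1, γ t ∈ U)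
    (htend : Tendsto (fun t => ψ (f (γ t))) (nhdsWithin 1 (Set.Ico 0 1)) (nhds 0))
    (hesc : ∀ z ∈ U, ¬ MapClusterPt z (nhdsWithin (1:ℝ) (Set.Ico 0 1)) γ) :
    IsAsympVal f X y := by
  haveI := neBot_aux
  obtain ⟨hψd, hψbij, ψ', hψ'd, hψinv⟩ := hψ
  obtain ⟨x0, hx0, hUeq⟩ := hU
  set S := {z ∈ X | f z ∈ V} with hSdef
  set l := nhdsWithin (1:ℝ) (Set.Ico 0 1) with hldef
  have hSeq : S = X ∩ f ⁻¹' V := by ext z; simp [hSdef, Set.mem_sep_iff]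
  have hSopen : IsOpen S := by
    rw [hSeq]; exact hf.continuousOn.isOpen_inter_preimage hX hV
  have hUS : U ⊆ S := hUeq ▸ connectedComponentIn_subset _ _
  have hSX : S ⊆ X := fun z hz => hz.1
  have hlmem : ∀ᶠ t in l, t ∈ Set.Ico (0:ℝ) 1 := self_mem_nhdsWithin
  have hψ'0 : ψ' 0 = y := by
    have := hψinv.1 hy; rwa [hψy] at this
  -- tendsto f ∘ γ → y
  have hfmemV : ∀ᶠ t in l, f (γ t) ∈ V := hlmem.mono fun t ht => (hUS (hγU t ht)).2
  have hψfball : ∀ᶠ t in l, ψ (f (γ t)) ∈ Metric.ball (0:ℂ) 1 :=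
    hfmemV.mono fun t ht => hψbij.mapsTo ht
  have htendf : Tendsto (fun t => f (γ t)) l (nhds y) := by
    have h1 : Tendsto (fun t => ψ (f (γ t))) l (nhdsWithin 0 (Metric.ball (0:ℂ) 1)) :=
      tendsto_nhdsWithin_iff.mpr ⟨htend, hψfball⟩
    have h2 : ContinuousWithinAt ψ' (Metric.ball (0:ℂ) 1) 0 :=
      hψ'd.continuousOn 0 (Metric.mem_ball_self one_pos)
    have h3 : Tendsto (fun t => ψ' (ψ (f (γ t)))) l (nhds y) := by
      rw [← hψ'0]; exact h2.tendsto.comp h1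
    refine h3.congr' (hfmemV.mono fun t ht => ?_)
    exact hψinv.1 ht
  refine ⟨γ, hγc, fun t ht => hSX (hUS (hγU t ht)), ?_, htendf⟩
  intro K hKX hK
  by_contra hcon
  push_neg at hcon
  have hcon' : ∀ t₀ ∈ Set.Ico (0:ℝ) 1, ∃ t, t₀ ≤ t ∧ t < 1 ∧ γ t ∈ K := by
    intro t₀ ht₀
    obtain ⟨t, h1, h2, h3⟩ := hcon t₀ ht₀
    exact ⟨t, h1, h2, h3⟩
  -- frequently in K
  have hfreq : ∃ᶠ t in l, γ t ∈ K := by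
    rw [frequently_iff]
    intro s hs
    rw [mem_nhdsWithin] at hs
    obtain ⟨u, huo, h1u, hus⟩ := hs
    obtain ⟨ε, hε, hball⟩ := Metric.isOpen_iff.mp huo 1 h1u
    set t₀ : ℝ := max (1 - ε/2) 0 with ht₀def
    have ht₀mem : t₀ ∈ Set.Ico (0:ℝ) 1 := by
      constructor
      · exact le_max_right _ _
      · apply max_lt <;> linarith
    obtain ⟨t, htt₀, ht1, htK⟩ := hcon' t₀ ht₀mem
    have htmem : t ∈ Set.Ico (0:ℝ) 1 := ⟨le_trans (le_max_right _ _) htt₀, ht1⟩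
    refine ⟨t, hus ⟨hball ?_, htmem⟩, htK⟩
    rw [Real.ball_eq_Ioo]
    constructor
    · have : 1 - ε/2 ≤ t := le_trans (le_max_left _ _) htt₀
      linarith
    · linarith
  have hNB : (Filter.map γ l ⊓ Filter.principal K).NeBot :=
    Filter.frequently_mem_iff_neBot.mp (Filter.frequently_map.mpr hfreq)
  obtain ⟨z, hzK, hzcl⟩ := hK.exists_clusterPt (f := Filter.map γ l ⊓ Filter.principal K)
    inf_le_right
  have hzγ : MapClusterPt z l γ := hzcl.mono inf_le_left
  have hzX : z ∈ X := hKX hzK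
  have hfc : ContinuousAt f z := hf.continuousOn.continuousAt (hX.mem_nhds hzX)
  have hfz : f z = y := by
    have h1 : MapClusterPt (f z) l (f ∘ γ) := hzγ.continuousAt_comp hfc
    have h2 : ClusterPt (f z) (nhds y) := h1.clusterPt.mono htendf
    exact eq_of_nhds_neBot h2
  have hzS : z ∈ S := ⟨hzX, by rw [hfz]; exact hy⟩
  have hzclU : z ∈ closure U := by
    rw [mem_closure_iff_clusterPt]
    refine hzγ.clusterPt.mono (Filter.le_principal_iff.mpr ?_)
    exact Filter.mem_map.mpr (hlmem.mono fun t ht => hγU t ht)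
  have hzU : z ∈ U := by
    have h1 : IsOpen (connectedComponentIn S z) := hSopen.connectedComponentIn
    have h2 : z ∈ connectedComponentIn S z := mem_connectedComponentIn hzS
    obtain ⟨u, huC, huU⟩ := _root_.mem_closure_iff.mp hzclU _ h1 h2
    have e1 : connectedComponentIn S z = connectedComponentIn S u := connectedComponentIn_eq huC
    have e2 : U = connectedComponentIn S u := by
      rw [hUeq]; exact connectedComponentIn_eq (hUeq ▸ huU)
    rw [e2, ← e1]; exact h2
  exact hesc z hzU hzγ

/-- if, on a connected component `U` of `f⁻¹(V)`, the map `ψ ∘ f` is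
cover-equivalent to the model `z ↦ zᵏ : 𝔻* → 𝔻` or to `z ↦ eᶻ : {Re < 0} → 𝔻`,
then `y = ψ⁻¹(0)` is an asymptotic value of `f : X → ℂ`. -/
theorem stmt_4 (X : Set ℂ) (hX : IsOpen X) (f : ℂ → ℂ)
    (hf : DifferentiableOn ℂ f X)
    (V : Set ℂ) (hV : IsOpen V) (y : ℂ) (hy : y ∈ V)
    (ψ : ℂ → ℂ) (hψ : Biholo ψ V (Metric.ball (0:ℂ) 1)) (hψy : ψ y = 0)
    (U : Set ℂ)
    (hU : ∃ x ∈ {z ∈ X | f z ∈ V}, U = connectedComponentIn {z ∈ X | f z ∈ V} x)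
    (hmodel :
      (∃ k : ℕ, 1 ≤ k ∧ ∃ φ : ℂ → ℂ,
        Biholo φ U (Metric.ball (0:ℂ) 1 \ {0}) ∧ ∀ z ∈ U, ψ (f z) = (φ z) ^ k) ∨
      (∃ φ : ℂ → ℂ,
        Biholo φ U {w : ℂ | w.re < 0} ∧ ∀ z ∈ U, ψ (f z) = Complex.exp (φ z))) :
    IsAsympVal f X y := by
  haveI := neBot_aux
  set l := nhdsWithin (1:ℝ) (Set.Ico 0 1) with hldef
  have hlmem : ∀ᶠ t in l, t ∈ Set.Ico (0:ℝ) 1 := self_mem_nhdsWithin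
  -- openness of U
  obtain ⟨x0, hx0, hUeq⟩ := hU
  have hSopen : IsOpen {z ∈ X | f z ∈ V} := by
    have : {z ∈ X | f z ∈ V} = X ∩ f ⁻¹' V := by ext z; simp [Set.mem_sep_iff]
    rw [this]; exact hf.continuousOn.isOpen_inter_preimage hX hV
  have hUopen : IsOpen U := hUeq ▸ hSopen.connectedComponentIn
  rcases hmodel with ⟨k, hk, φ, ⟨hφd, hφbij, φ', hφ'd, hφinv⟩, hmod⟩ |
    ⟨φ, ⟨hφd, hφbij, φ', hφ'd, hφinv⟩, hmod⟩
  · -- case (a): model z ↦ z^k on punctured disk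
    set D : Set ℂ := Metric.ball (0:ℂ) 1 \ {0} with hDdef
    set m : ℝ → ℂ := fun t => (((1 - t)/2 : ℝ) : ℂ) with hmdef
    have hmD : ∀ t ∈ Set.Ico (0:ℝ) 1, m t ∈ D := by
      intro t ht
      have hpos : (0:ℝ) < (1 - t)/2 := by linarith [ht.2]
      constructor
      · rw [Metric.mem_ball, dist_zero_right, Complex.norm_real, Real.norm_eq_abs,
          abs_of_pos hpos]
        linarith [ht.1]
      · simp only [hmdef, Set.mem_singleton_iff, Complex.ofReal_eq_zero]
        intro h; linarith
    have hφ'maps : Set.MapsTo φ' D U := by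
      intro w hw
      obtain ⟨u, huU, rfl⟩ := hφbij.surjOn hw
      rw [hφinv.1 huU]; exact huU
    set γ : ℝ → ℂ := fun t => φ' (m t) with hγdef
    have hmc : Continuous m := Complex.continuous_ofReal.comp (by continuity)
    have hγc : ContinuousOn γ (Set.Ico 0 1) :=
      hφ'd.continuousOn.comp hmc.continuousOn hmD
    have hγU : ∀ t ∈ Set.Ico (0:ℝ) 1, γ t ∈ U := fun t ht => hφ'maps (hmD t ht)
    have hφγ : ∀ t ∈ Set.Ico (0:ℝ) 1, φ (γ t) = m t := fun t ht => hφinv.2 (hmD t ht)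
    have hm0 : Tendsto m l (nhds 0) := by
      have h0 : Tendsto m (nhds 1) (nhds (m 1)) := hmc.tendsto 1
      have hm1 : m 1 = 0 := by simp [hmdef]
      rw [hm1] at h0
      exact h0.mono_left nhdsWithin_le_nhds
    refine key_lemma X hX f hf V hV y hy ψ hψ hψy U ⟨x0, hx0, hUeq⟩ γ hγc hγU ?_ ?_
    · have h1 : Tendsto (fun t => (m t)^k) l (nhds 0) := by
        have := hm0.pow k
        rwa [zero_pow (by omega : k ≠ 0)] at this
      refine h1.congr' (hlmem.mono fun t ht => ?_)
      simp only [hmod (γ t) (hγU t ht), hφγ t ht]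
    · intro z hzU hcl
      have hφc : ContinuousAt φ z := hφd.continuousOn.continuousAt (hUopen.mem_nhds hzU)
      have h2 : MapClusterPt (φ z) l (φ ∘ γ) := hcl.continuousAt_comp hφc
      have h3 : MapClusterPt (φ z) l m := by
        have heq : φ ∘ γ =ᶠ[l] m := hlmem.mono fun t ht => hφγ t ht
        rwa [MapClusterPt, Filter.map_congr heq] at h2
      have h4 : ClusterPt (φ z) (nhds (0:ℂ)) := h3.clusterPt.mono hm0
      exact (hφbij.mapsTo hzU).2 (by simp [eq_of_nhds_neBot h4])
  · -- case (b): model z ↦ exp z on left half-plane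
    set D : Set ℂ := {w : ℂ | w.re < 0} with hDdef
    set m : ℝ → ℂ := fun t => ((-(1 - t)⁻¹ : ℝ) : ℂ) with hmdef
    have hmD : ∀ t ∈ Set.Ico (0:ℝ) 1, m t ∈ D := by
      intro t ht
      have hpos : (0:ℝ) < (1 - t)⁻¹ := by
        apply inv_pos.mpr; linarith [ht.2]
      simp only [hDdef, Set.mem_setOf_eq, hmdef, Complex.ofReal_re]
      linarith
    have hφ'maps : Set.MapsTo φ' D U := by
      intro w hw
      obtain ⟨u, huU, rfl⟩ := hφbij.surjOn hw
      rw [hφinv.1 huU]; exact huU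
    set γ : ℝ → ℂ := fun t => φ' (m t) with hγdef
    have hmc : ContinuousOn m (Set.Ico 0 1) := by
      apply Complex.continuous_ofReal.comp_continuousOn
      apply ContinuousOn.neg
      apply ContinuousOn.inv₀
      · exact (continuousOn_const.sub continuousOn_id)
      · intro t ht
        have : t < 1 := ht.2
        intro h
        have := sub_eq_zero.mp h
        linarith
    have hγc : ContinuousOn γ (Set.Ico 0 1) := hφ'd.continuousOn.comp hmc hmD
    have hγU : ∀ t ∈ Set.Ico (0:ℝ) 1, γ t ∈ U := fun t ht => hφ'maps (hmD t ht)
    have hφγ : ∀ t ∈ Set.Ico (0:ℝ) 1, φ (γ t) = m t := fun t ht => hφinv.2 (hmD t ht)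
    have hsub : Tendsto (fun t : ℝ => 1 - t) l (nhdsWithin 0 (Set.Ioi 0)) := by
      rw [tendsto_nhdsWithin_iff]
      constructor
      · have hc : Continuous (fun t : ℝ => 1 - t) := continuous_const.sub continuous_id
        have h0 := hc.tendsto 1
        norm_num at h0
        exact h0.mono_left nhdsWithin_le_nhds
      · exact hlmem.mono fun t ht => by simp only [Set.mem_Ioi]; linarith [ht.2]
    have hinv : Tendsto (fun t : ℝ => (1 - t)⁻¹) l atTop :=
      tendsto_inv_nhdsGT_zero.comp hsub
    refine key_lemma X hX f hf V hV y hy ψ hψ hψy U ⟨x0, hx0, hUeq⟩ γ hγc hγU ?_ ?_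
    · have h1 : Tendsto (fun t => Complex.exp (m t)) l (nhds 0) := by
        apply Complex.tendsto_exp_comap_re_atBot.comp
        rw [Filter.tendsto_comap_iff]
        have : Tendsto (fun t : ℝ => -(1 - t)⁻¹) l atBot :=
          tendsto_neg_atTop_atBot.comp hinv
        refine this.congr fun t => ?_
        simp only [Function.comp_apply, hmdef, Complex.ofReal_re]
      refine h1.congr' (hlmem.mono fun t ht => ?_)
      simp only [hmod (γ t) (hγU t ht), hφγ t ht]
    · intro z hzU hcl
      have hφc : ContinuousAt φ z := hφd.continuousOn.continuousAt (hUopen.mem_nhds hzU)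
      have h2 : MapClusterPt (φ z) l (φ ∘ γ) := hcl.continuousAt_comp hφc
      have h3 : MapClusterPt (φ z) l m := by
        have heq : φ ∘ γ =ᶠ[l] m := hlmem.mono fun t ht => hφγ t ht
        rwa [MapClusterPt, Filter.map_congr heq] at h2
      have h4 : MapClusterPt ‖φ z‖ l (fun t => ‖m t‖) :=
        h3.continuousAt_comp continuous_norm.continuousAt
      have h5 : Tendsto (fun t => ‖m t‖) l atTop := by
        refine hinv.congr' (hlmem.mono fun t ht => ?_)
        have hpos : (0:ℝ) < (1 - t)⁻¹ := by
          apply inv_pos.mpr; linarith [ht.2]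
        simp only [hmdef, Complex.norm_real, Real.norm_eq_abs, abs_neg, abs_of_pos hpos]
      have h6 : ClusterPt ‖φ z‖ atTop := h4.clusterPt.mono h5
      exact h6.ne (inf_nhds_atTop _)
end

section
/- Let X, Y, Z be open subsets of ℂ. Let f : X → ℂ be holomorphic with f(X) ⊆ Y and g : Y → ℂ holomorphic with g(Y) ⊆ Z, both nowhere constant. Assume f : X → Y has no asymptotic value in Y and g : Y → Z has no asymptotic value in Z. Then g ∘ f : X → Z has no asymptotic value in Z. -/
/-!
Let `γ` be a path escaping to the boundary of `X` with `g (f (γ t)) → z ∈ Z`. If `f ∘ γ` eventually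
leaves every compact subset of `Y`, then `z` is an asymptotic value of `g`. Otherwise `f ∘ γ`
accumulates at some `y ∈ Y`, and by continuity every accumulation point of `f ∘ γ` in `Y` lies in
the fibre `g⁻¹ z`. Since `f` has no asymptotic value, `f ∘ γ` does not converge to `y`, so by the
intermediate value theorem applied to `t ↦ |f (γ t) - y|` it accumulates on every small circle
around `y`. Hence `y` is a non-isolated point of `g⁻¹ z`, which is impossible for a nowhere
constant holomorphic `g`.
-/

/-- `f` is constant on no nonempty open subset of `X`. -/
def NowhereConstantOn (f : ℂ → ℂ) (X : Set ℂ) : Prop :=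
  ∀ U : Set ℂ, IsOpen U → U.Nonempty → U ⊆ X → ¬ ∃ c : ℂ, ∀ z ∈ U, f z = c

/-- `y` is an asymptotic value of `f : X → Y`. -/
def IsAsympValIn (f : ℂ → ℂ) (X Y : Set ℂ) (y : ℂ) : Prop :=
  y ∈ Y ∧ IsAsympVal f X y

open Filter Topology Metric Set

theorem exists_Ico_forall_iff_eventually_nhdsLT {α : Type*} [LinearOrder α] [TopologicalSpace α]
    [OrderTopology α] [DenselyOrdered α] {a b : α} (hab : a < b) {P : α → Prop} :
    (∃ t₀ ∈ Ico a b, ∀ t, t₀ ≤ t → t < b → P t) ↔ ∀ᶠ t in 𝓝[<] b, P t := by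
  rw [eventually_iff, mem_nhdsLT_iff_exists_Ioo_subset' hab]
  constructor
  · rintro ⟨t₀, ht₀, h⟩
    exact ⟨t₀, ht₀.2, fun t ht => h t ht.1.le ht.2⟩
  · rintro ⟨l, hl, h⟩
    obtain ⟨t₀, hlt₀, ht₀b⟩ := exists_between (max_lt hl hab)
    exact ⟨t₀, ⟨(le_max_right _ _).trans hlt₀.le, ht₀b⟩,
      fun t ht₀t htb => h ⟨(le_max_left _ _).trans_lt (hlt₀.trans_le ht₀t), htb⟩⟩

section PathsNearEndpoint

variable {α : Type*} [ConditionallyCompleteLinearOrder α] [DenselyOrdered α]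
  [TopologicalSpace α] [OrderTopology α] {a b : α}

theorem frequently_eq_of_frequently_lt_of_frequently_le {β : Type*} [LinearOrder β]
    [TopologicalSpace β] [OrderClosedTopology β] (hab : a < b) {φ : α → β}
    (hφ : ContinuousOn φ (Ico a b)) {r : β} (hlt : ∃ᶠ t in 𝓝[<] b, φ t < r)
    (hle : ∃ᶠ t in 𝓝[<] b, r ≤ φ t) : ∃ᶠ t in 𝓝[<] b, φ t = r := by
  rw [(nhdsLT_basis_of_exists_lt ⟨a, hab⟩).frequently_iff] at hlt hle ⊢
  intro l hl
  have hl' : max l a < b := max_lt hl hab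
  obtain ⟨u, hu, hφu⟩ := hlt _ hl'
  obtain ⟨s, hs, hφs⟩ := hle _ hl'
  have hsub : uIcc u s ⊆ Ioo (max l a) b := ordConnected_Ioo.uIcc_subset hu hs
  have hcont : ContinuousOn φ (uIcc u s) :=
    hφ.mono (hsub.trans fun t ht => ⟨le_of_max_le_right ht.1.le, ht.2⟩)
  obtain ⟨t, ht, hφt⟩ := intermediate_value_uIcc hcont (mem_uIcc.2 (Or.inl ⟨hφu.le, hφs⟩))
  exact ⟨t, ⟨(le_max_left l a).trans_lt (hsub ht).1, (hsub ht).2⟩, hφt⟩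

theorem MapClusterPt.frequently_mapClusterPt_of_not_tendsto {E : Type*} [MetricSpace E]
    [ProperSpace E] (hab : a < b) {F : α → E} (hF : ContinuousOn F (Ico a b)) {y : E}
    (hy : MapClusterPt y (𝓝[<] b) F) (hFy : ¬ Tendsto F (𝓝[<] b) (𝓝 y)) :
    ∃ᶠ y' in 𝓝[≠] y, MapClusterPt y' (𝓝[<] b) F := by
  rw [Metric.tendsto_nhds] at hFy
  push Not at hFy
  obtain ⟨δ, hδ, hfar⟩ := hFy
  rw [Filter.frequently_iff]
  intro U hU
  obtain ⟨ε, hε, hεU⟩ := Metric.mem_nhdsWithin_iff.1 hU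
  set r := min δ (ε / 2)
  have hr : 0 < r := lt_min hδ (half_pos hε)
  have hnear : ∃ᶠ t in 𝓝[<] b, dist (F t) y < r :=
    mapClusterPt_iff_frequently.1 hy _ (ball_mem_nhds y hr)
  have hfar' : ∃ᶠ t in 𝓝[<] b, r ≤ dist (F t) y :=
    hfar.mono fun t ht => (min_le_left _ _).trans ht
  have hsphere : ∃ᶠ t in 𝓝[<] b, F t ∈ sphere y r :=
    frequently_eq_of_frequently_lt_of_frequently_le hab
      ((continuous_id.dist continuous_const).comp_continuousOn hF) hnear hfar'
  obtain ⟨y', hy'r, hy'⟩ := (isCompact_sphere y r).exists_mapClusterPt_of_frequently hsphere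
  refine ⟨y', hεU ⟨?_, ne_of_mem_sphere hy'r hr.ne'⟩, hy'⟩
  rw [mem_sphere] at hy'r
  rw [mem_ball, hy'r]
  exact (min_le_right _ _).trans_lt (half_lt_self hε)

end PathsNearEndpoint

theorem MapClusterPt.eq_of_tendsto_comp {ι X T : Type*} [TopologicalSpace X] [TopologicalSpace T]
    [T2Space T] {l : Filter ι} {u : ι → X} {x : X} {g : X → T} {z : T}
    (hx : MapClusterPt x l u) (hg : ContinuousAt g x) (h : Tendsto (g ∘ u) l (𝓝 z)) :
    g x = z :=
  eq_of_nhds_neBot (ClusterPt.mono (hx.continuousAt_comp hg) h)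

theorem NowhereConstantOn.eventually_ne {g : ℂ → ℂ} {Y : Set ℂ} (hgnc : NowhereConstantOn g Y)
    (hY : IsOpen Y) (hg : DifferentiableOn ℂ g Y) {y : ℂ} (hy : y ∈ Y) :
    ∀ᶠ w in 𝓝[≠] y, g w ≠ g y := by
  refine ((hg.analyticAt (hY.mem_nhds hy)).eventually_eq_or_eventually_ne analyticAt_const)
    |>.resolve_left fun hconst => ?_
  obtain ⟨U, hU, hUo, hyU⟩ := _root_.eventually_nhds_iff.1 (hconst.and (hY.mem_nhds hy))
  exact hgnc U hUo ⟨y, hyU⟩ (fun w hw => (hU w hw).2) ⟨g y, fun w hw => (hU w hw).1⟩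

theorem stmt_7_general (X Y Z : Set ℂ) (hY : IsOpen Y)
    (f g : ℂ → ℂ)
    (hf : DifferentiableOn ℂ f X) (hg : DifferentiableOn ℂ g Y)
    (hfXY : f '' X ⊆ Y)
    (hgnc : NowhereConstantOn g Y)
    (hfav : ¬ ∃ y : ℂ, IsAsympValIn f X Y y)
    (hgav : ¬ ∃ z : ℂ, IsAsympValIn g Y Z z) :
    ¬ ∃ z : ℂ, IsAsympValIn (g ∘ f) X Z z := by
  rintro ⟨z, hzZ, γ, hγc, hγX, hγesc, hγlim⟩
  rw [nhdsWithin_Ico_eq_nhdsLT zero_lt_one] at hγlim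
  have hFc : ContinuousOn (f ∘ γ) (Ico 0 1) := hf.continuousOn.comp hγc hγX
  have hFY : ∀ t ∈ Ico (0 : ℝ) 1, f (γ t) ∈ Y := fun t ht => hfXY (mem_image_of_mem f (hγX t ht))
  by_cases hesc : ∀ K ⊆ Y, IsCompact K → ∀ᶠ t in 𝓝[<] (1 : ℝ), f (γ t) ∉ K
  · refine hgav ⟨z, hzZ, f ∘ γ, hFc, hFY,
      fun K hKY hK => (exists_Ico_forall_iff_eventually_nhdsLT one_pos).2 (hesc K hKY hK), ?_⟩
    rwa [nhdsWithin_Ico_eq_nhdsLT zero_lt_one]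
  push Not at hesc
  obtain ⟨K, hKY, hK, hfreq⟩ := hesc
  obtain ⟨y, hyK, hy⟩ := hK.exists_mapClusterPt_of_frequently hfreq
  have hyY : y ∈ Y := hKY hyK
  have hfiber : ∀ y' ∈ Y, MapClusterPt y' (𝓝[<] 1) (f ∘ γ) → g y' = z := fun y' hy'Y hy' =>
    hy'.eq_of_tendsto_comp (hg.continuousOn.continuousAt (hY.mem_nhds hy'Y)) hγlim
  have hfy : ¬ Tendsto (f ∘ γ) (𝓝[<] 1) (𝓝 y) := fun h =>
    hfav ⟨y, hyY, γ, hγc, hγX, hγesc, by rwa [nhdsWithin_Ico_eq_nhdsLT zero_lt_one]⟩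
  obtain ⟨y', hy', hgy', hy'Y⟩ :=
    ((hy.frequently_mapClusterPt_of_not_tendsto one_pos hFc hfy).and_eventually
      ((hgnc.eventually_ne hY hg hyY).and (mem_nhdsWithin_of_mem_nhds (hY.mem_nhds hyY)))).exists
  exact hgy' ((hfiber y' hy'Y hy').trans (hfiber y hyY hy).symm)

/-- if `f : X → Y` and `g : Y → Z` are nowhere constant holomorphic
maps without asymptotic values, then `g ∘ f : X → Z` has no asymptotic value. -/
theorem stmt_7 (X Y Z : Set ℂ) (hX : IsOpen X) (hY : IsOpen Y) (hZ : IsOpen Z)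
    (f g : ℂ → ℂ)
    (hf : DifferentiableOn ℂ f X) (hg : DifferentiableOn ℂ g Y)
    (hfXY : f '' X ⊆ Y) (hgYZ : g '' Y ⊆ Z)
    (hfnc : NowhereConstantOn f X) (hgnc : NowhereConstantOn g Y)
    (hfav : ¬ ∃ y : ℂ, IsAsympValIn f X Y y)
    (hgav : ¬ ∃ z : ℂ, IsAsympValIn g Y Z z) :
    ¬ ∃ z : ℂ, IsAsympValIn (g ∘ f) X Z z :=
  stmt_7_general X Y Z hY f g hf hg hfXY hgnc hfav hgav
end

section
/- Let X, Y be open subsets of ℂ and f : X → ℂ holomorphic with f(X) ⊆ Y. Assume there exist increasing sequences of open sets Uₙ ⊆ X and Vₙ ⊆ Y (Uₙ ⊆ Uₙ₊₁, Vₙ ⊆ Vₙ₊₁) with X = ⋃ₙ Uₙ, Y = ⋃ₙ Vₙ, f(Uₙ) ⊆ Vₙ for all n, and such that for each n the restriction f : Uₙ → Vₙ has no asymptotic value in Vₙ. Then f : X → Y has no asymptotic value in Y. -/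
lemma asympVal_of_segment (f : ℂ → ℂ) (Um : Set ℂ) (γ : ℝ → ℂ) (t₁ s : ℝ)
    (h0 : 0 ≤ t₁) (hts : t₁ < s) (hs1 : s ≤ 1)
    (hγc : ContinuousOn γ (Set.Ico 0 1))
    (hmaps : ∀ t, t₁ ≤ t → t < s → γ t ∈ Um)
    (hleave : ∀ K : Set ℂ, K ⊆ Um → IsCompact K →
      ∃ t₀, t₁ ≤ t₀ ∧ t₀ < s ∧ ∀ t, t₀ ≤ t → t < s → γ t ∉ K)
    (w : ℂ)
    (hw : Filter.Tendsto (fun t => f (γ t)) (nhdsWithin s (Set.Ico t₁ s)) (nhds w)) :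
    IsAsympVal f Um w := by
  set ℓ : ℝ → ℝ := fun u => t₁ + (s - t₁) * u with hℓdef
  have hℓcont : Continuous ℓ := by continuity
  have hℓmem : ∀ u ∈ Set.Ico (0:ℝ) 1, ℓ u ∈ Set.Ico t₁ s := by
    intro u hu
    obtain ⟨hu0, hu1⟩ := hu
    constructor
    · have : 0 ≤ (s - t₁) * u := mul_nonneg (by linarith) hu0
      simp only [hℓdef]; linarith
    · have : (s - t₁) * u < (s - t₁) * 1 := by
        apply mul_lt_mul_of_pos_left hu1; linarith
      simp only [hℓdef]; linarith
  have hsub : Set.Ico t₁ s ⊆ Set.Ico (0:ℝ) 1 := by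
    intro t ht; exact ⟨le_trans h0 ht.1, lt_of_lt_of_le ht.2 hs1⟩
  have hℓtend : Filter.Tendsto ℓ (nhdsWithin 1 (Set.Ico 0 1)) (nhdsWithin s (Set.Ico t₁ s)) := by
    rw [tendsto_nhdsWithin_iff]
    constructor
    · have : Filter.Tendsto ℓ (nhds 1) (nhds (ℓ 1)) := hℓcont.tendsto 1
      have h1 : ℓ 1 = s := by simp [hℓdef]
      rw [h1] at this
      exact this.mono_left nhdsWithin_le_nhds
    · exact eventually_mem_nhdsWithin.mono (fun u hu => hℓmem u hu)
  refine ⟨fun u => γ (ℓ u), ?_, ?_, ?_, ?_⟩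
  · exact (hγc.mono hsub).comp hℓcont.continuousOn (fun u hu => hℓmem u hu)
  · intro u hu
    exact hmaps (ℓ u) (hℓmem u hu).1 (hℓmem u hu).2
  · intro K hK hKc
    obtain ⟨t₀, ht₀1, ht₀s, ht₀⟩ := hleave K hK hKc
    refine ⟨(t₀ - t₁) / (s - t₁), ⟨?_, ?_⟩, ?_⟩
    · apply div_nonneg (by linarith) (by linarith)
    · rw [div_lt_one (by linarith)]; linarith
    · intro u hu hu1
      apply ht₀
      · rw [div_le_iff₀ (by linarith)] at hu
        simp only [hℓdef]; nlinarith
      · exact (hℓmem u ⟨le_trans (div_nonneg (by linarith) (by linarith)) hu, hu1⟩).2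
  · exact hw.comp hℓtend

/-- if `X = ⋃ Uₙ`, `Y = ⋃ Vₙ` are increasing unions of open sets with
`f(Uₙ) ⊆ Vₙ` and no restriction `f : Uₙ → Vₙ` has an asymptotic value, then
`f : X → Y` has no asymptotic value. -/
theorem stmt_8 (X Y : Set ℂ) (hX : IsOpen X) (hY : IsOpen Y)
    (f : ℂ → ℂ) (hf : DifferentiableOn ℂ f X) (hXY : f '' X ⊆ Y)
    (U V : ℕ → Set ℂ)
    (hUo : ∀ n, IsOpen (U n)) (hVo : ∀ n, IsOpen (V n))
    (hUmono : ∀ n, U n ⊆ U (n + 1)) (hVmono : ∀ n, V n ⊆ V (n + 1))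
    (hUX : X = ⋃ n, U n) (hVY : Y = ⋃ n, V n)
    (hUV : ∀ n, f '' U n ⊆ V n)
    (hav : ∀ n, ¬ ∃ y : ℂ, IsAsympValIn f (U n) (V n) y) :
    ¬ ∃ y : ℂ, IsAsympValIn f X Y y := by
  rintro ⟨y, hyY, γ, hγc, hγX, hγK, hγlim⟩
  obtain ⟨N, hyVN⟩ : ∃ n, y ∈ V n := by
    rw [hVY] at hyY; exact Set.mem_iUnion.mp hyY
  have hUmono' : ∀ {a b : ℕ}, a ≤ b → U a ⊆ U b :=
    fun {a b} h => monotone_nat_of_le_succ hUmono h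
  have hVmono' : ∀ {a b : ℕ}, a ≤ b → V a ⊆ V b :=
    fun {a b} h => monotone_nat_of_le_succ hVmono h
  have hUsubX : ∀ n, U n ⊆ X := fun n => hUX ▸ Set.subset_iUnion U n
  -- find t₁ with f (γ t) ∈ V N for t ∈ [t₁, 1)
  have hev : {t : ℝ | f (γ t) ∈ V N} ∈ nhdsWithin 1 (Set.Ico 0 1) :=
    hγlim.eventually ((hVo N).mem_nhds hyVN)
  obtain ⟨ε, hε, hball⟩ := Metric.mem_nhdsWithin_iff.mp hev
  set t₁ : ℝ := max 0 (1 - ε / 2) with ht₁def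
  have ht₁0 : 0 ≤ t₁ := le_max_left _ _
  have ht₁half : 1 - ε / 2 ≤ t₁ := le_max_right _ _
  have ht₁1 : t₁ < 1 := by
    apply max_lt one_pos; linarith
  have hVt : ∀ t, t₁ ≤ t → t < 1 → f (γ t) ∈ V N := by
    intro t ht ht'
    apply hball
    refine ⟨?_, le_trans ht₁0 ht, ht'⟩
    rw [Metric.mem_ball, Real.dist_eq, abs_sub_lt_iff]
    constructor <;> linarith
  -- choose m
  obtain ⟨m₀, hm₀⟩ : ∃ n, γ t₁ ∈ U n := by
    have h := hγX t₁ ⟨ht₁0, ht₁1⟩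
    rw [hUX] at h; exact Set.mem_iUnion.mp h
  set m : ℕ := max m₀ N with hmdef
  have hγt₁Um : γ t₁ ∈ U m := hUmono' (le_max_left _ _) hm₀
  have hVNm : V N ⊆ V m := hVmono' (le_max_right _ _)
  set S : Set ℝ := {t : ℝ | t₁ ≤ t ∧ t < 1 ∧ γ t ∉ U m} with hSdef
  by_cases hS : S.Nonempty
  · -- γ exits U m at time s := sInf S
    have hbdd : BddBelow S := ⟨t₁, fun t ht => ht.1⟩
    set s : ℝ := sInf S with hsdef
    have hst₁ : t₁ ≤ s := le_csInf hS (fun t ht => ht.1)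
    have hs1 : s < 1 := by
      obtain ⟨t, ht⟩ := hS
      exact lt_of_le_of_lt (csInf_le hbdd ht) ht.2.1
    have hsmem : s ∈ Set.Ico (0:ℝ) 1 := ⟨le_trans ht₁0 hst₁, hs1⟩
    have hin : ∀ t, t₁ ≤ t → t < s → γ t ∈ U m := by
      intro t ht hts
      by_contra hc
      have : t ∈ S := ⟨ht, lt_trans hts hs1, hc⟩
      exact absurd (csInf_le hbdd this) (not_le.mpr hts)
    have hγs : γ s ∉ U m := by
      intro hc
      have hev2 : {t : ℝ | γ t ∈ U m} ∈ nhdsWithin s (Set.Ico 0 1) :=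
        (hγc s hsmem) ((hUo m).mem_nhds hc)
      obtain ⟨δ, hδ, hδball⟩ := Metric.mem_nhdsWithin_iff.mp hev2
      have hmin : 0 < min δ (1 - s) := lt_min hδ (by linarith)
      obtain ⟨x, hxS, hxlt⟩ := exists_lt_of_csInf_lt hS (by linarith : s < s + min δ (1 - s))
      have hxs : s ≤ x := csInf_le hbdd hxS
      have hxU : γ x ∈ U m := by
        apply hδball
        refine ⟨?_, le_trans ht₁0 hxS.1, hxS.2.1⟩
        rw [Metric.mem_ball, Real.dist_eq, abs_sub_lt_iff]
        have h1 : min δ (1 - s) ≤ δ := min_le_left _ _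
        constructor <;> linarith
      exact hxS.2.2 hxU
    have hst₁' : t₁ < s := lt_of_le_of_ne hst₁ (by
      intro h; rw [← h] at hγs; exact hγs hγt₁Um)
    have hγsX : γ s ∈ X := hγX s hsmem
    -- f (γ s) is an asymptotic value of f : U m → V m
    apply hav m
    refine ⟨f (γ s), hVNm (hVt s hst₁ hs1), ?_⟩
    apply asympVal_of_segment f (U m) γ t₁ s ht₁0 hst₁' (le_of_lt hs1) hγc hin
    · intro K hK hKc
      have hγsK : γ s ∉ K := fun hc => hγs (hK hc)
      have hev3 : {t : ℝ | γ t ∉ K} ∈ nhdsWithin s (Set.Ico 0 1) :=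
        (hγc s hsmem) (hKc.isClosed.isOpen_compl.mem_nhds hγsK)
      obtain ⟨δ, hδ, hδball⟩ := Metric.mem_nhdsWithin_iff.mp hev3
      refine ⟨max t₁ (s - δ / 2), le_max_left _ _, max_lt hst₁' (by linarith), ?_⟩
      intro t ht hts
      apply hδball
      have h1 : s - δ / 2 ≤ t := le_trans (le_max_right _ _) ht
      have h2 : t₁ ≤ t := le_trans (le_max_left _ _) ht
      refine ⟨?_, le_trans ht₁0 h2, lt_trans hts hs1⟩
      rw [Metric.mem_ball, Real.dist_eq, abs_sub_lt_iff]
      constructor <;> linarith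
    · have h1 : Filter.Tendsto γ (nhdsWithin s (Set.Ico t₁ s)) (nhds (γ s)) := by
        apply (hγc s hsmem).mono_left (nhdsWithin_mono _ _)
        intro t ht; exact ⟨le_trans ht₁0 ht.1, lt_trans ht.2 hs1⟩
      have h2 : ContinuousAt f (γ s) :=
        hf.continuousOn.continuousAt (hX.mem_nhds hγsX)
      exact h2.tendsto.comp h1
  · -- γ stays in U m after t₁ : y is an asymptotic value of f : U m → V m
    rw [Set.not_nonempty_iff_eq_empty] at hS
    have hin : ∀ t, t₁ ≤ t → t < 1 → γ t ∈ U m := by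
      intro t ht ht1
      by_contra hc
      have : t ∈ S := ⟨ht, ht1, hc⟩
      rw [hS] at this; exact this
    apply hav m
    refine ⟨y, hVNm hyVN, ?_⟩
    apply asympVal_of_segment f (U m) γ t₁ 1 ht₁0 ht₁1 le_rfl hγc hin
    · intro K hK hKc
      obtain ⟨t₀, ht₀mem, ht₀⟩ := hγK K (le_trans hK (hUsubX m)) hKc
      refine ⟨max t₀ t₁, le_max_right _ _, max_lt ht₀mem.2 ht₁1, ?_⟩
      intro t ht ht1
      exact ht₀ t (le_trans (le_max_left _ _) ht) ht1
    · exact hγlim.mono_left (nhdsWithin_mono _ (fun t ht => ⟨le_trans ht₁0 ht.1, ht.2⟩))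
end

section
/- Let G be a finite Blaschke product, let K ⊆ 𝔻 be compact, and let a ∈ 𝔻 \ K be a point lying in the connected component of closure(𝔻) \ K that contains the unit circle. Then for every b ∈ 𝔻 with G(b) = a, the point b lies in the connected component of closure(𝔻) \ { z ∈ 𝔻 : G(z) ∈ K } that contains the unit circle. (That is, if K does not separate a from ∂𝔻 in the closed disk, then G⁻¹(K) does not separate any preimage of a from ∂𝔻.) -/
/-- `G` agrees on the closed unit disk with a finite Blaschke product
`λ · ∏ᵢ (z - aᵢ)/(1 - conj(aᵢ) z)` with `d ≥ 1`, `|λ| = 1`, `|aᵢ| < 1`. -/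
def IsFiniteBlaschke (G : ℂ → ℂ) : Prop :=
  ∃ (d : ℕ) (lam : ℂ) (a : Fin d → ℂ),
    1 ≤ d ∧ ‖lam‖ = 1 ∧ (∀ i, ‖a i‖ < 1) ∧
    ∀ z ∈ Metric.closedBall (0:ℂ) 1,
      G z = lam * ∏ i, (z - a i) / (1 - (starRingEnd ℂ) (a i) * z)

/-!
Fatten `K` to a closed set `K'` with `K ⊆ interior K'` such that `a` still lies in the
unbounded component `U` of `ℂ \ K'`, and let `V` be the component of `b` in `𝔻 ∩ G⁻¹(U)`.
If `closure V` stayed inside `𝔻`, then by the open mapping theorem `G(V)` would be open, and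
also closed in `U` because points of `∂V ∩ 𝔻` are mapped outside `U`; hence `G(V) = U`,
impossible as `U` is unbounded while `G(closure V)` is compact. So `closure V` reaches the unit
circle, and `closure V ∪ ∂𝔻` is a connected set containing `b` and the circle; it misses
`G⁻¹(K)` since `G(closure V ∩ 𝔻) ⊆ closure U` misses `interior K'`.
-/

open Metric Set Bornology

theorem closure_connectedComponentIn_inter_subset {α : Type*} [TopologicalSpace α]
    (F : Set α) (x : α) :
    closure (connectedComponentIn F x) ∩ F ⊆ connectedComponentIn F x := by
  rintro z ⟨hz, hzF⟩
  have hx : x ∈ F := by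
    by_contra hx
    simp [connectedComponentIn_eq_empty hx] at hz
  have hpre : IsPreconnected (insert z (connectedComponentIn F x)) :=
    isPreconnected_connectedComponentIn.subset_closure (subset_insert _ _)
      (insert_subset hz subset_closure)
  exact hpre.subset_connectedComponentIn (mem_insert_of_mem _ (mem_connectedComponentIn hx))
    (insert_subset hzF (connectedComponentIn_subset _ _)) (mem_insert _ _)

theorem IsCompact.exists_cthickening_subset_open_mem_connectedComponentIn_compl
    {X : Type*} [MetricSpace X] [LocallyPathConnectedSpace X] {K W : Set X}
    (hK : IsCompact K) (hW : IsOpen W) (hKW : K ⊆ W) {x y : X}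
    (hy : y ∈ connectedComponentIn Kᶜ x) :
    ∃ δ > 0, cthickening δ K ⊆ W ∧ y ∈ connectedComponentIn (cthickening δ K)ᶜ x := by
  have hx : x ∈ Kᶜ := by
    by_contra hx
    simp [connectedComponentIn_eq_empty hx] at hy
  have hpath : IsPathConnected (connectedComponentIn Kᶜ x) :=
    hK.isClosed.isOpen_compl.connectedComponentIn.isConnected_iff_isPathConnected.mp
      (isConnected_connectedComponentIn_iff.mpr hx)
  obtain ⟨γ, hγ⟩ := hpath.joinedIn x (mem_connectedComponentIn hx) y hy
  have hKγ : K ⊆ W ∩ (range γ)ᶜ := by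
    rintro z hz
    refine ⟨hKW hz, ?_⟩
    rintro ⟨t, rfl⟩
    exact connectedComponentIn_subset _ _ (hγ t) hz
  obtain ⟨δ, hδ, hδK⟩ := hK.exists_cthickening_subset_open
    (hW.inter (isCompact_range γ.continuous).isClosed.isOpen_compl) hKγ
  refine ⟨δ, hδ, hδK.trans inter_subset_left, ?_⟩
  have hrange : range γ ⊆ connectedComponentIn (cthickening δ K)ᶜ x :=
    (isPreconnected_range γ.continuous).subset_connectedComponentIn ⟨0, γ.source⟩
      fun z hz hzK => (hδK hzK).2 hz
  exact hrange ⟨1, γ.target⟩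

theorem not_isBounded_connectedComponentIn_compl {E : Type*} [NormedAddCommGroup E]
    [NormedSpace ℝ E] {K : Set E} {x : E} (hx : x ≠ 0) (hK : K ⊆ ball 0 ‖x‖) :
    ¬ IsBounded (connectedComponentIn Kᶜ x) := by
  set ray := (fun t : ℝ => t • x) '' Ici 1
  have hnorm : ∀ t ∈ Ici (1 : ℝ), ‖t • x‖ = t * ‖x‖ := fun t (ht : 1 ≤ t) => by
    rw [norm_smul, Real.norm_of_nonneg (zero_le_one.trans ht)]
  have hray : ray ⊆ connectedComponentIn Kᶜ x := by
    have hcont : Continuous fun t : ℝ => t • x := by fun_prop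
    refine (isPreconnected_Ici.image _ hcont.continuousOn).subset_connectedComponentIn
      ⟨1, self_mem_Ici, one_smul ℝ x⟩ ?_
    rintro _ ⟨t, ht, rfl⟩ hK'
    have := mem_ball_zero_iff.mp (hK hK')
    rw [hnorm t ht] at this
    nlinarith [norm_pos_iff.mpr hx, show (1 : ℝ) ≤ t from ht]
  intro hb
  obtain ⟨C, hC⟩ := isBounded_iff_forall_norm_le.mp (hb.subset hray)
  have hxpos := norm_pos_iff.mpr hx
  set t := max (C / ‖x‖) 1 + 1
  have ht : t ∈ Ici (1 : ℝ) := by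
    simp only [mem_Ici, t]
    linarith [le_max_right (C / ‖x‖) 1]
  have := hC _ ⟨t, ht, rfl⟩
  rw [hnorm t ht, ← le_div_iff₀ hxpos] at this
  linarith [le_max_left (C / ‖x‖) 1]

theorem closure_connectedComponentIn_preimage_inter_subset {X Y : Type*} [TopologicalSpace X]
    [TopologicalSpace Y] {f : X → Y} {Ω : Set X} (hΩ : IsOpen Ω) (hf : ContinuousOn f Ω)
    (U : Set Y) (b : X) :
    closure (connectedComponentIn (Ω ∩ f ⁻¹' U) b) ∩ Ω ⊆ f ⁻¹' closure U := by
  rintro z ⟨hz, hzΩ⟩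
  have himg : f '' connectedComponentIn (Ω ∩ f ⁻¹' U) b ⊆ U :=
    image_subset_iff.mpr fun _ h => (connectedComponentIn_subset _ _ h).2
  exact closure_mono himg (mem_closure_image (hf.continuousAt (hΩ.mem_nhds hzΩ)) hz)

theorem not_closure_connectedComponentIn_preimage_subset {f : ℂ → ℂ} {Ω U : Set ℂ}
    (hΩ : IsOpen Ω) (hΩb : IsBounded Ω) (hf : DifferentiableOn ℂ f Ω)
    (hU : IsOpen U) (hUc : IsPreconnected U) (hUb : ¬ IsBounded U) {b : ℂ} (hb : b ∈ Ω)
    (hfb : f b ∈ U) : ¬ closure (connectedComponentIn (Ω ∩ f ⁻¹' U) b) ⊆ Ω := by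
  set V := connectedComponentIn (Ω ∩ f ⁻¹' U) b
  intro hVΩ
  have hV : IsOpen V := (hf.continuousOn.isOpen_inter_preimage hΩ hU).connectedComponentIn
  have hbV : b ∈ V := mem_connectedComponentIn ⟨hb, hfb⟩
  have hVc : IsCompact (closure V) :=
    isCompact_of_isClosed_isBounded isClosed_closure (hΩb.subset hVΩ)
  have hfV : ContinuousOn f (closure V) := hf.continuousOn.mono hVΩ
  have hfront : ∀ z ∈ closure V, f z ∈ U → z ∈ V := fun z hz hfz =>
    closure_connectedComponentIn_inter_subset _ _ ⟨hz, hVΩ hz, hfz⟩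
  rcases ((hf.analyticOnNhd hΩ).mono ((connectedComponentIn_subset _ _).trans
    inter_subset_left)).is_constant_or_isOpen isPreconnected_connectedComponentIn with
    ⟨w, hw⟩ | hopen
  · have hclosed : closure V ⊆ V := by
      intro z hz
      have himg : f '' V ⊆ {w} := by
        rintro _ ⟨y, hy, rfl⟩
        exact hw y hy
      have hfz : f z ∈ closure {w} :=
        closure_mono himg (((hfV z hz).mono subset_closure).mem_closure_image hz)
      rw [closure_singleton, mem_singleton_iff, ← hw b hbV] at hfz
      exact hfront z hz (hfz ▸ hfb)
    have : V = univ := (isClopen_iff.mp ⟨isClosed_of_closure_subset hclosed, hV⟩).resolve_left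
      (nonempty_iff_ne_empty.mp ⟨b, hbV⟩)
    exact NormedSpace.unbounded_univ ℂ ℂ (hΩb.subset (this ▸ subset_closure.trans hVΩ))
  · have hUV : U ⊆ f '' V := by
      refine hUc.subset_of_closure_inter_subset (hopen V subset_rfl hV)
        ⟨f b, hfb, b, hbV, rfl⟩ ?_
      rintro _ ⟨hu, hfu⟩
      obtain ⟨z, hz, rfl⟩ := closure_minimal (image_mono subset_closure)
        (hVc.image_of_continuousOn hfV).isClosed hu
      exact ⟨z, hfront z hz hfu, rfl⟩
    exact hUb ((hVc.image_of_continuousOn hfV).isBounded.subset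
      (hUV.trans (image_mono subset_closure)))

theorem one_sub_conj_mul_ne_zero {a z : ℂ} (ha : ‖a‖ < 1) (hz : ‖z‖ ≤ 1) :
    1 - (starRingEnd ℂ) a * z ≠ 0 := by
  refine sub_ne_zero.mpr fun h => ?_
  have : ‖(starRingEnd ℂ) a * z‖ < 1 := by
    rw [norm_mul, Complex.norm_conj]
    nlinarith [norm_nonneg a, norm_nonneg z]
  rw [← h, norm_one] at this
  exact this.false

theorem IsFiniteBlaschke.differentiableOn {G : ℂ → ℂ} (hG : IsFiniteBlaschke G) :
    DifferentiableOn ℂ G (ball 0 1) := by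
  obtain ⟨d, lam, a, -, -, ha, hGeq⟩ := hG
  refine DifferentiableOn.congr ?_ fun z hz => hGeq z (ball_subset_closedBall hz)
  intro z hz
  have hz' : ‖z‖ ≤ 1 := (mem_ball_zero_iff.mp hz).le
  fun_prop (disch := exact one_sub_conj_mul_ne_zero (ha _) hz')

theorem stmt_9_general (G : ℂ → ℂ) (hG : IsFiniteBlaschke G)
    (K : Set ℂ) (hK : IsCompact K) (hKD : K ⊆ Metric.ball (0:ℂ) 1)
    (a : ℂ)
    (hacomp : a ∈ connectedComponentIn (Metric.closedBall (0:ℂ) 1 \ K) 1) :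
    ∀ b ∈ Metric.ball (0:ℂ) 1, G b = a →
      b ∈ connectedComponentIn
        (Metric.closedBall (0:ℂ) 1 \ {z ∈ Metric.ball (0:ℂ) 1 | G z ∈ K}) 1 := by
  intro b hb hGb
  obtain ⟨δ, hδ, hδK, haU⟩ := hK.exists_cthickening_subset_open_mem_connectedComponentIn_compl
    isOpen_ball hKD (connectedComponentIn_mono _ (fun z hz => hz.2) hacomp)
  set U := connectedComponentIn (cthickening δ K)ᶜ 1
  set V := connectedComponentIn (ball 0 1 ∩ G ⁻¹' U) b
  have hbV : b ∈ V := mem_connectedComponentIn ⟨hb, by rwa [mem_preimage, hGb]⟩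
  have hVball : closure V ⊆ closedBall 0 1 := closure_minimal
    ((connectedComponentIn_subset _ _).trans (inter_subset_left.trans ball_subset_closedBall))
    isClosed_closedBall
  obtain ⟨z, hzV, hzb⟩ := not_subset.mp <| not_closure_connectedComponentIn_preimage_subset
    isOpen_ball isBounded_ball hG.differentiableOn
    isClosed_cthickening.isOpen_compl.connectedComponentIn isPreconnected_connectedComponentIn
    (not_isBounded_connectedComponentIn_compl one_ne_zero (by rwa [norm_one])) hb (by rwa [hGb])
  have hz : z ∈ sphere 0 1 := by
    rw [← closedBall_sdiff_ball]
    exact ⟨hVball hzV, hzb⟩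
  have hVK : closure V ⊆ closedBall 0 1 \ {z ∈ ball 0 1 | G z ∈ K} := by
    refine fun w hw => ⟨hVball hw, fun ⟨hwb, hwK⟩ => ?_⟩
    have hGw := closure_mono (connectedComponentIn_subset _ _) <|
      closure_connectedComponentIn_preimage_inter_subset isOpen_ball
        hG.differentiableOn.continuousOn U b ⟨hw, hwb⟩
    rw [closure_compl] at hGw
    exact hGw (thickening_subset_interior_cthickening δ K (self_subset_thickening hδ K hwK))
  have hsph : sphere 0 1 ⊆ closedBall 0 1 \ {z ∈ ball 0 1 | G z ∈ K} := fun w hw =>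
    ⟨sphere_subset_closedBall hw, fun h => sphere_disjoint_ball.ne_of_mem hw h.1 rfl⟩
  exact (isPreconnected_connectedComponentIn.closure.union z hzV hz
    (isConnected_sphere (by simp) 0 zero_le_one).isPreconnected).subset_connectedComponentIn
    (Or.inr (by simp)) (union_subset hVK hsph) (Or.inl (subset_closure hbV))

/-- if a compact `K ⊆ 𝔻` does not separate `a ∈ 𝔻 \ K` from the unit
circle in the closed disk (i.e. `a` lies in the connected component of `closure 𝔻 \ K`
containing the circle, the component of the point `1`), then `G⁻¹(K)` does not separate
any `G`-preimage of `a` from the unit circle. -/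
theorem stmt_9 (G : ℂ → ℂ) (hG : IsFiniteBlaschke G)
    (K : Set ℂ) (hK : IsCompact K) (hKD : K ⊆ Metric.ball (0:ℂ) 1)
    (a : ℂ) (ha : a ∈ Metric.ball (0:ℂ) 1 \ K)
    (hacomp : a ∈ connectedComponentIn (Metric.closedBall (0:ℂ) 1 \ K) 1) :
    ∀ b ∈ Metric.ball (0:ℂ) 1, G b = a →
      b ∈ connectedComponentIn
        (Metric.closedBall (0:ℂ) 1 \ {z ∈ Metric.ball (0:ℂ) 1 | G z ∈ K}) 1 :=
  stmt_9_general G hG K hK hKD a hacomp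
end

section
/- Let X and Y be open subsets of ℂ, f₁ : X → ℂ holomorphic with f₁(X) ⊆ Y, and f₂ : Y → ℂ holomorphic. Let A ⊆ X and C ⊆ ℂ be nonempty connected open sets, and assume f₂ ∘ f₁ restricts to a proper map from A to C, i.e. f₂(f₁(A)) ⊆ C and for every compact M ⊆ C the set { z ∈ A : f₂(f₁(z)) ∈ M } is compact. Let B = f₁(A). Then: (1) f₁ restricts to a proper map from A to B; (2) f₂ restricts to a proper map from B to C; (3) B is a connected component of f₂⁻¹(C) = { y ∈ Y : f₂(y) ∈ C }. -/
/-!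
Write `B = f₁(A)`. Properness of `f₁ : A → B` and `f₂ : B → C` is inherited from that of
the composite by pulling back and pushing forward compact sets. A proper map on a nonempty
open subset of `ℂ` cannot be constant (the fibre would be all of `A`, which is not compact),
so by the open mapping theorem `B` is open. It is also closed in `f₂⁻¹(C)`: near a point `y`
of `f₂⁻¹(C)` in the closure of `B`, the set `B` lies in `{b ∈ B | f₂ b ∈ N}` for a compact
neighbourhood `N ⊆ C` of `f₂ y`, and that set is compact, hence closed. Being connected, `B`
is therefore a connected component of `f₂⁻¹(C)`.
-/

open Set

def IsProperOn {X Y : Type*} [TopologicalSpace X] [TopologicalSpace Y]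
    (g : X → Y) (S : Set X) (T : Set Y) : Prop :=
  ∀ M : Set Y, M ⊆ T → IsCompact M → IsCompact {x ∈ S | g x ∈ M}

section

variable {X Y Z : Type*} [TopologicalSpace X] [TopologicalSpace Y] [TopologicalSpace Z]

theorem IsProperOn.left_of_comp [T2Space X] [T2Space Y] {f : X → Y} {g : Y → Z} {A : Set X}
    {C : Set Z} (h : IsProperOn (g ∘ f) A C) (hAC : MapsTo (g ∘ f) A C)
    (hf : ContinuousOn f A) (hg : ContinuousOn g (f '' A)) :
    IsProperOn f A (f '' A) := by
  intro K hKB hK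
  have hgK : g '' K ⊆ C := by
    rintro _ ⟨_, hy, rfl⟩
    obtain ⟨z, hz, rfl⟩ := hKB hy
    exact hAC hz
  have hS : IsCompact {z ∈ A | g (f z) ∈ g '' K} := h _ hgK (hK.image_of_continuousOn (hg.mono hKB))
  have hSK : {z ∈ A | f z ∈ K} = {z ∈ A | g (f z) ∈ g '' K} ∩ f ⁻¹' K := by
    ext z
    exact ⟨fun hz => ⟨⟨hz.1, mem_image_of_mem g hz.2⟩, hz.2⟩, fun hz => ⟨hz.1.1, hz.2⟩⟩
  rw [hSK]
  exact hS.of_isClosed_subset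
    ((hf.mono fun _ hz => hz.1).preimage_isClosed_of_isClosed hS.isClosed hK.isClosed)
    inter_subset_left

theorem IsProperOn.right_of_comp {f : X → Y} {g : Y → Z} {A : Set X} {C : Set Z}
    (h : IsProperOn (g ∘ f) A C) (hf : ContinuousOn f A) :
    IsProperOn g (f '' A) C := by
  intro M hMC hM
  have hfS : {y ∈ f '' A | g y ∈ M} = f '' {z ∈ A | g (f z) ∈ M} := by
    ext y
    constructor
    · rintro ⟨⟨z, hz, rfl⟩, hy⟩
      exact ⟨z, ⟨hz, hy⟩, rfl⟩
    · rintro ⟨z, ⟨hz, hzM⟩, rfl⟩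
      exact ⟨mem_image_of_mem f hz, hzM⟩
  rw [hfS]
  exact (h M hMC hM).image_of_continuousOn (hf.mono fun _ hz => hz.1)

theorem IsProperOn.isCompact_of_eqOn_const {g : X → Y} {S : Set X} {T : Set Y} {c : Y}
    (h : IsProperOn g S T) (hc : c ∈ T) (hg : ∀ x ∈ S, g x = c) : IsCompact S := by
  have hS : {x ∈ S | g x ∈ ({c} : Set Y)} = S := sep_eq_self_iff_mem_true.mpr hg
  rw [← hS]
  exact h _ (singleton_subset_iff.mpr hc) isCompact_singleton

theorem IsProperOn.inter_closure_subset [T2Space Y] [LocallyCompactSpace Z] {g : Y → Z}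
    {B U : Set Y} {C : Set Z} (h : IsProperOn g B C) (hU : IsOpen U) (hg : ContinuousOn g U)
    (hC : IsOpen C) : {y ∈ U | g y ∈ C} ∩ closure B ⊆ B := by
  rintro y ⟨⟨hyU, hyC⟩, hyB⟩
  obtain ⟨N, hN, hyN, hNC⟩ := exists_compact_subset hC hyC
  set W := U ∩ g ⁻¹' interior N
  have hW : IsOpen W := hg.isOpen_inter_preimage hU isOpen_interior
  have hWB : W ∩ B ⊆ {b ∈ B | g b ∈ N} := fun b hb => ⟨hb.2, interior_subset hb.1.2⟩
  have hK : IsCompact {b ∈ B | g b ∈ N} := h N hNC hN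
  have hyK : y ∈ {b ∈ B | g b ∈ N} :=
    closure_minimal hWB hK.isClosed (hW.inter_closure ⟨⟨hyU, hyN⟩, hyB⟩)
  exact hyK.1

theorem eq_connectedComponentIn_of_isOpen_of_inter_closure_subset {B P : Set X}
    (hBo : IsOpen B) (hBc : IsPreconnected B) (hBP : B ⊆ P) (hcl : P ∩ closure B ⊆ B)
    {x : X} (hx : x ∈ B) : B = connectedComponentIn P x := by
  refine (hBc.subset_connectedComponentIn hx hBP).antisymm ?_
  have hcover : connectedComponentIn P x ⊆ B ∪ (closure B)ᶜ := fun p hp =>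
    (em (p ∈ closure B)).imp (fun hpB => hcl ⟨connectedComponentIn_subset P x hp, hpB⟩) id
  exact isPreconnected_connectedComponentIn.subset_left_of_subset_union hBo
    isClosed_closure.isOpen_compl (disjoint_compl_right.mono_left subset_closure) hcover
    ⟨x, mem_connectedComponentIn (hBP hx), hx⟩

theorem not_isCompact_of_isOpen [T2Space X] [PreconnectedSpace X] [NoncompactSpace X] {A : Set X} (hA : IsOpen A) (hne : A.Nonempty) :
    ¬IsCompact A := fun hc => by
  have hAuniv : A = univ := IsClopen.eq_univ ⟨hc.isClosed, hA⟩ hne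
  exact noncompact_univ X (hAuniv ▸ hc)

theorem IsProperOn.isOpen_image_of_analyticOnNhd {f : ℂ → ℂ} {g : ℂ → Z} {A : Set ℂ} {C : Set Z} (h : IsProperOn (g ∘ f) A C)
    (hAC : MapsTo (g ∘ f) A C) (hf : AnalyticOnNhd ℂ f A) (hAo : IsOpen A)
    (hAc : IsConnected A) : IsOpen (f '' A) := by
  rcases hf.is_constant_or_isOpen hAc.isPreconnected with ⟨w, hw⟩ | hopen
  · obtain ⟨a, ha⟩ := hAc.nonempty
    refine absurd (h.isCompact_of_eqOn_const (c := g w) ?_ fun z hz => ?_)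
      (not_isCompact_of_isOpen hAo hAc.nonempty)
    · simpa only [Function.comp_apply, hw a ha] using hAC ha
    · simp only [Function.comp_apply, hw z hz]
  · exact hopen A subset_rfl hAo

end

theorem stmt_15_general (X Y : Set ℂ) (hY : IsOpen Y)
    (f₁ f₂ : ℂ → ℂ)
    (hf₁ : DifferentiableOn ℂ f₁ X) (hf₂ : DifferentiableOn ℂ f₂ Y)
    (hf₁XY : f₁ '' X ⊆ Y)
    (A C : Set ℂ) (hAo : IsOpen A) (hCo : IsOpen C)
    (hAc : IsConnected A)
    (hAX : A ⊆ X)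
    (hsub : ∀ z ∈ A, f₂ (f₁ z) ∈ C)
    (hproper : ∀ M : Set ℂ, M ⊆ C → IsCompact M → IsCompact {z ∈ A | f₂ (f₁ z) ∈ M}) :
    (∀ K : Set ℂ, K ⊆ f₁ '' A → IsCompact K → IsCompact {z ∈ A | f₁ z ∈ K}) ∧
    (∀ M : Set ℂ, M ⊆ C → IsCompact M → IsCompact {y ∈ f₁ '' A | f₂ y ∈ M}) ∧
    (∃ x ∈ {y ∈ Y | f₂ y ∈ C}, f₁ '' A = connectedComponentIn {y ∈ Y | f₂ y ∈ C} x) := by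
  have hproper' : IsProperOn (f₂ ∘ f₁) A C := hproper
  have hBY : f₁ '' A ⊆ Y := (image_mono hAX).trans hf₁XY
  have hf₁A : ContinuousOn f₁ A := (hf₁.mono hAX).continuousOn
  have hB₂ : IsProperOn f₂ (f₁ '' A) C := hproper'.right_of_comp hf₁A
  refine ⟨hproper'.left_of_comp hsub hf₁A (hf₂.continuousOn.mono hBY), hB₂, ?_⟩
  obtain ⟨a, ha⟩ := hAc.nonempty
  have hBP : f₁ '' A ⊆ {y ∈ Y | f₂ y ∈ C} := by
    rintro _ ⟨z, hz, rfl⟩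
    exact ⟨hBY (mem_image_of_mem f₁ hz), hsub z hz⟩
  refine ⟨f₁ a, hBP (mem_image_of_mem f₁ ha), ?_⟩
  exact eq_connectedComponentIn_of_isOpen_of_inter_closure_subset
    (hproper'.isOpen_image_of_analyticOnNhd hsub ((hf₁.mono hAX).analyticOnNhd hAo) hAo hAc)
    (hAc.image f₁ hf₁A).isPreconnected hBP (hB₂.inter_closure_subset hY hf₂.continuousOn hCo)
    (mem_image_of_mem f₁ ha)

/-- if `f₂ ∘ f₁` restricts to a proper map from the nonempty connected
open set `A ⊆ X` to the nonempty connected open set `C`, then with `B = f₁(A)`: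
(1) `f₁ : A → B` is proper; (2) `f₂ : B → C` is proper; (3) `B` is a connected
component of `f₂⁻¹(C) = {y ∈ Y | f₂ y ∈ C}`. -/
theorem stmt_15 (X Y : Set ℂ) (hX : IsOpen X) (hY : IsOpen Y)
    (f₁ f₂ : ℂ → ℂ)
    (hf₁ : DifferentiableOn ℂ f₁ X) (hf₂ : DifferentiableOn ℂ f₂ Y)
    (hf₁XY : f₁ '' X ⊆ Y)
    (A C : Set ℂ) (hAo : IsOpen A) (hCo : IsOpen C)
    (hAc : IsConnected A) (hCc : IsConnected C)
    (hAX : A ⊆ X)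
    (hsub : ∀ z ∈ A, f₂ (f₁ z) ∈ C)
    (hproper : ∀ M : Set ℂ, M ⊆ C → IsCompact M → IsCompact {z ∈ A | f₂ (f₁ z) ∈ M}) :
    (∀ K : Set ℂ, K ⊆ f₁ '' A → IsCompact K → IsCompact {z ∈ A | f₁ z ∈ K}) ∧
    (∀ M : Set ℂ, M ⊆ C → IsCompact M → IsCompact {y ∈ f₁ '' A | f₂ y ∈ M}) ∧
    (∃ x ∈ {y ∈ Y | f₂ y ∈ C}, f₁ '' A = connectedComponentIn {y ∈ Y | f₂ y ∈ C} x) :=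
  stmt_15_general X Y hY f₁ f₂ hf₁ hf₂ hf₁XY A C hAo hCo hAc hAX hsub hproper
end

section
/- Let G : 𝔻 → 𝔻 be a holomorphic self-map of the open unit disk. Suppose there exist w₀ ∈ 𝔻 and a ∈ ℂ with |a| = 1 such that the orbit Gⁿ(w₀) converges to a as n → ∞. Then for every w ∈ 𝔻, the orbit Gⁿ(w) also converges to a. -/
/-!
Two orbits of a holomorphic self-map `G` of the disc stay at bounded pseudo-hyperbolic distance,
since by Schwarz–Pick every iterate `Gⁿ` is a contraction for that distance. A pseudo-hyperbolic
ball of radius `c < 1` centred at `y` has Euclidean radius at most `c / (1 - c) · (1 - |y|²)`,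
which tends to `0` as `y` tends to the unit circle; so the orbit of `w` follows that of `w₀`.
-/

open Metric Filter Topology Set ComplexConjugate

/-- The disc automorphism exchanging `w` and `0`; `‖moebius w z‖` is the pseudo-hyperbolic
distance between `w` and `z`. -/
noncomputable def moebius (w z : ℂ) : ℂ := (w - z) / (1 - conj w * z)

lemma sq_norm_one_sub_conj_mul_sub_sq_norm_sub (w z : ℂ) :
    ‖1 - conj w * z‖ ^ 2 - ‖w - z‖ ^ 2 = (1 - ‖w‖ ^ 2) * (1 - ‖z‖ ^ 2) := by
  simp only [Complex.sq_norm, Complex.normSq_apply, Complex.mul_re, Complex.mul_im,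
    Complex.sub_re, Complex.sub_im, Complex.one_re, Complex.one_im, Complex.conj_re,
    Complex.conj_im]
  ring

lemma one_sub_conj_mul_ne_zero_s16 {w z : ℂ} (hw : ‖w‖ < 1) (hz : ‖z‖ < 1) :
    1 - conj w * z ≠ 0 := by
  rw [sub_ne_zero]
  refine fun h => (?_ : ‖conj w * z‖ < 1).ne (by rw [← h, norm_one])
  rw [norm_mul, Complex.norm_conj]
  exact mul_lt_one_of_nonneg_of_lt_one_left (norm_nonneg w) hw hz.le

lemma norm_moebius_lt_one {w z : ℂ} (hw : ‖w‖ < 1) (hz : ‖z‖ < 1) : ‖moebius w z‖ < 1 := by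
  rw [moebius, norm_div, div_lt_one (norm_pos_iff.mpr (one_sub_conj_mul_ne_zero_s16 hw hz))]
  have := sq_norm_one_sub_conj_mul_sub_sq_norm_sub w z
  have : 0 < (1 - ‖w‖ ^ 2) * (1 - ‖z‖ ^ 2) := by
    apply mul_pos <;> nlinarith [norm_nonneg w, norm_nonneg z]
  exact lt_of_pow_lt_pow_left₀ 2 (norm_nonneg _) (by linarith)

@[simp] lemma moebius_self (w : ℂ) : moebius w w = 0 := by simp [moebius]

@[simp] lemma moebius_zero (w : ℂ) : moebius w 0 = w := by simp [moebius]

lemma moebius_moebius {w z : ℂ} (hw : ‖w‖ < 1) (hz : ‖z‖ < 1) :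
    moebius w (moebius w z) = z := by
  have hwz : 1 - z * conj w ≠ 0 := mul_comm (conj w) z ▸ one_sub_conj_mul_ne_zero_s16 hw hz
  have hww : 1 - w * conj w ≠ 0 := mul_comm (conj w) w ▸ one_sub_conj_mul_ne_zero_s16 hw hw
  unfold moebius
  field_simp
  rw [show 1 - z * conj w - (w - z) * conj w = 1 - w * conj w by ring, div_eq_iff hww]
  ring

lemma differentiableOn_moebius {w : ℂ} (hw : ‖w‖ < 1) :
    DifferentiableOn ℂ (moebius w) (ball 0 1) :=
  (differentiableOn_const w |>.sub differentiableOn_id).div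
    (differentiableOn_const 1 |>.sub (differentiableOn_const _ |>.mul differentiableOn_id))
    fun _z hz => one_sub_conj_mul_ne_zero_s16 hw (mem_ball_zero_iff.mp hz)

lemma mapsTo_moebius {w : ℂ} (hw : ‖w‖ < 1) : MapsTo (moebius w) (ball 0 1) (ball 0 1) :=
  fun _z hz => mem_ball_zero_iff.mpr (norm_moebius_lt_one hw (mem_ball_zero_iff.mp hz))

theorem norm_moebius_le_of_mapsTo_ball {G : ℂ → ℂ} (hG : DifferentiableOn ℂ G (ball 0 1))
    (hmaps : MapsTo G (ball 0 1) (ball 0 1)) {w z : ℂ} (hw : w ∈ ball 0 1)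
    (hz : z ∈ ball 0 1) : ‖moebius (G w) (G z)‖ ≤ ‖moebius w z‖ := by
  rw [mem_ball_zero_iff] at hw hz
  have hGw : ‖G w‖ < 1 := mem_ball_zero_iff.mp (hmaps (mem_ball_zero_iff.mpr hw))
  -- Schwarz's lemma for `moebius (G w) ∘ G ∘ moebius w`, which fixes `0`
  have key := Complex.norm_le_norm_of_mapsTo_ball
    ((differentiableOn_moebius hGw).comp (hG.comp (differentiableOn_moebius hw)
      (mapsTo_moebius hw)) (hmaps.comp (mapsTo_moebius hw)))
    (((mapsTo_moebius hGw).comp (hmaps.comp (mapsTo_moebius hw))).mono_right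
      ball_subset_closedBall)
    (by simp [Function.comp_def]) (z := moebius w z) (by simpa using norm_moebius_lt_one hw hz)
  simpa [Function.comp_def, moebius_moebius hw hz] using key

lemma norm_sub_le_of_norm_moebius_le {x y : ℂ} {c : ℝ} (hy : ‖y‖ < 1) (hx : ‖x‖ < 1)
    (hc : c < 1) (h : ‖moebius y x‖ ≤ c) : ‖x - y‖ ≤ c / (1 - c) * (1 - ‖y‖ ^ 2) := by
  have hden := one_sub_conj_mul_ne_zero_s16 hy hx
  have hc0 : 0 ≤ c := (norm_nonneg _).trans h
  rw [moebius, norm_div, div_le_iff₀ (norm_pos_iff.mpr hden)] at h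
  have hden_le : ‖1 - conj y * x‖ ≤ (1 - ‖y‖ ^ 2) + ‖y - x‖ := calc
    ‖1 - conj y * x‖ = ‖((1 - ‖y‖ ^ 2 : ℝ) : ℂ) + conj y * (y - x)‖ := by
      rw [mul_sub, Complex.conj_mul']; push_cast; ring_nf
    _ ≤ |1 - ‖y‖ ^ 2| + ‖y‖ * ‖y - x‖ := by
      refine (norm_add_le _ _).trans_eq ?_
      rw [Complex.norm_real, Real.norm_eq_abs, norm_mul, Complex.norm_conj]
    _ ≤ (1 - ‖y‖ ^ 2) + ‖y - x‖ := by
      rw [abs_of_nonneg (by nlinarith [norm_nonneg y])]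
      gcongr
      exact mul_le_of_le_one_left (norm_nonneg _) hy.le
  rw [norm_sub_rev, div_mul_eq_mul_div, le_div_iff₀ (sub_pos.mpr hc)]
  nlinarith

theorem tendsto_of_norm_moebius_le {ι : Type*} {l : Filter ι} {x y : ι → ℂ} {a : ℂ} {c : ℝ}
    (ha : ‖a‖ = 1) (hc : c < 1) (hy : ∀ i, ‖y i‖ < 1) (hx : ∀ i, ‖x i‖ < 1)
    (hxy : ∀ i, ‖moebius (y i) (x i)‖ ≤ c) (hya : Tendsto y l (𝓝 a)) : Tendsto x l (𝓝 a) := by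
  have hrad : Tendsto (fun i => c / (1 - c) * (1 - ‖y i‖ ^ 2)) l (𝓝 0) := by
    simpa [ha] using ((hya.norm.pow 2).const_sub 1).const_mul (c / (1 - c))
  have hsub : Tendsto (fun i => x i - y i) l (𝓝 0) :=
    squeeze_zero_norm (fun i => norm_sub_le_of_norm_moebius_le (hy i) (hx i) hc (hxy i)) hrad
  simpa using hsub.add hya

/-- let `G : 𝔻 → 𝔻` be a holomorphic self-map of the unit disk. If some
orbit `Gⁿ(w₀)` converges to a point `a` of the unit circle, then every orbit `Gⁿ(w)`,
`w ∈ 𝔻`, converges to `a`. -/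
theorem stmt_16 (G : ℂ → ℂ)
    (hG : DifferentiableOn ℂ G (Metric.ball (0:ℂ) 1))
    (hmaps : Set.MapsTo G (Metric.ball (0:ℂ) 1) (Metric.ball (0:ℂ) 1))
    (w₀ : ℂ) (hw₀ : w₀ ∈ Metric.ball (0:ℂ) 1)
    (a : ℂ) (ha : ‖a‖ = 1)
    (horb : Filter.Tendsto (fun n => G^[n] w₀) Filter.atTop (nhds a)) :
    ∀ w ∈ Metric.ball (0:ℂ) 1,
      Filter.Tendsto (fun n => G^[n] w) Filter.atTop (nhds a) := by
  intro w hw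
  have horbit : ∀ u ∈ ball (0 : ℂ) 1, ∀ n, ‖G^[n] u‖ < 1 := fun u hu n =>
    mem_ball_zero_iff.mp (hmaps.iterate n hu)
  refine tendsto_of_norm_moebius_le ha (norm_moebius_lt_one (horbit w₀ hw₀ 0) (horbit w hw 0))
    (horbit w₀ hw₀) (horbit w hw) (fun n => ?_) horb
  exact norm_moebius_le_of_mapsTo_ball (hG.iterate hmaps n) (hmaps.iterate n) hw₀ hw
end

section
/- Consider the entire function f(z) = z·exp(z). Then f has no asymptotic value in ℂ \ {0}: there is no continuous path γ : [0,1) → ℂ with |γ(t)| → ∞ as t → 1 such that f(γ(t)) converges to some a ∈ ℂ with a ≠ 0. -/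
/-!
Let `z(t) → ∞` along the path with `f(z) = z e^z → c ≠ 0`. Taking logarithms of
`‖f(z)‖ = ‖z‖ e^{Re z}` gives `Re z = log ‖f(z)‖ - log ‖z‖ = o(‖z‖)`, so `(z/‖z‖)² → -1`
and `|Im z| → ∞`. Since `f(z)/‖f(z)‖ = (z/‖z‖) e^{i Im z}`, squaring
shows that `e^{2i Im z}` converges. But `2 Im z` is continuous and unbounded near the end of
the path, so it runs through a whole period of `e^{iy}` arbitrarily close to the end, and
`e^{2i Im z}` takes both values `1` and `-1` there.
-/

open Filter Set Topology Complex Real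

lemma IsPreconnected.exists_exp_mul_I_eq {S : Set ℝ} (hS : IsPreconnected S) {s₁ s₂ : ℝ}
    (h₁ : s₁ ∈ S) (h₂ : s₂ ∈ S) (hdist : 2 * π ≤ |s₁ - s₂|) (v : ℝ) :
    ∃ s ∈ S, exp (s * I) = exp (v * I) := by
  have hw := toIcoMod_mem_Ico two_pi_pos (min s₁ s₂) v
  refine ⟨_, hS.ordConnected.uIcc_subset h₁ h₂ ⟨hw.1, ?_⟩, ?_⟩
  · linarith [hw.2, max_sub_min_eq_abs' s₁ s₂]
  · rw [← self_sub_toIcoDiv_zsmul, zsmul_eq_mul]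
    push_cast
    exact exp_mul_I_periodic.sub_int_mul_eq _

lemma frequently_exp_mul_I_eq {y : ℝ → ℝ} {a b : ℝ} (hab : a < b)
    (hy : ContinuousOn y (Ioo a b)) (hy_abs : Tendsto (fun t ↦ |y t|) (𝓝[<] b) atTop)
    (v : ℝ) : ∃ᶠ t in 𝓝[<] b, exp (y t * I) = exp (v * I) := by
  rw [frequently_iff]
  intro U hU
  obtain ⟨c, hcb, hcU⟩ := mem_nhdsLT_iff_exists_Ioo_subset.mp hU
  have hJ : Ioo (max a c) b ∈ 𝓝[<] b := Ioo_mem_nhdsLT (max_lt hab hcb)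
  obtain ⟨t₁, ht₁⟩ := Filter.nonempty_of_mem hJ
  obtain ⟨t₂, hfar, ht₂⟩ := ((hy_abs.eventually_ge_atTop (|y t₁| + 2 * π)).and hJ).exists
  have hS : IsPreconnected (y '' Ioo (max a c) b) :=
    isPreconnected_Ioo.image y (hy.mono (Ioo_subset_Ioo_left (le_max_left a c)))
  obtain ⟨_, ⟨t, ht, rfl⟩, hexp⟩ := hS.exists_exp_mul_I_eq (mem_image_of_mem y ht₂)
    (mem_image_of_mem y ht₁) (by linarith [abs_sub_abs_le_abs_sub (y t₂) (y t₁)]) v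
  exact ⟨t, hcU (Ioo_subset_Ioo_left (le_max_right a c) ht), hexp⟩

lemma not_tendsto_exp_mul_I {y : ℝ → ℝ} {a b : ℝ} (hab : a < b)
    (hy : ContinuousOn y (Ioo a b)) (hy_abs : Tendsto (fun t ↦ |y t|) (𝓝[<] b) atTop)
    (c : ℂ) : ¬ Tendsto (fun t ↦ exp (y t * I)) (𝓝[<] b) (𝓝 c) := by
  intro h
  have key (v : ℝ) : c = exp (v * I) :=
    tendsto_nhds_unique_of_frequently_eq h tendsto_const_nhds
      (frequently_exp_mul_I_eq hab hy hy_abs v)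
  have := (key 0).symm.trans (key π)
  norm_num at this

lemma div_norm_sq_add_one {w : ℂ} (hw : w ≠ 0) :
    (w / ‖w‖) ^ 2 + 1 = 2 * (w.re / ‖w‖) * (w / ‖w‖) := by
  have hn : (‖w‖ : ℂ) ≠ 0 := by simpa using hw
  have key : w ^ 2 + (‖w‖ : ℂ) ^ 2 = 2 * w.re * w := by
    rw [← ofReal_pow, Complex.sq_norm]
    apply Complex.ext <;> simp [normSq_apply, sq] <;> ring
  field_simp
  linear_combination key

lemma mul_exp_div_norm (w : ℂ) : w * exp w / ‖w * exp w‖ = w / ‖w‖ * exp (w.im * I) := by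
  have hexp : exp w = Real.exp w.re * exp (w.im * I) := by
    rw [ofReal_exp, ← Complex.exp_add, re_add_im]
  have he : (Real.exp w.re : ℂ) ≠ 0 := by exact_mod_cast (Real.exp_pos _).ne'
  rw [norm_mul, norm_exp, hexp]
  push_cast
  field_simp

section
variable {α : Type*} {l : Filter α} {z : α → ℂ}

lemma tendsto_re_div_norm_of_tendsto_mul_exp {c : ℂ} (hc : c ≠ 0)
    (hz : Tendsto (fun t ↦ ‖z t‖) l atTop)
    (hf : Tendsto (fun t ↦ z t * exp (z t)) l (𝓝 c)) :
    Tendsto (fun t ↦ (z t).re / ‖z t‖) l (𝓝 0) := by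
  have hlog : Tendsto (fun t ↦ Real.log ‖z t * exp (z t)‖) l (𝓝 (Real.log ‖c‖)) :=
    (continuousAt_log (norm_ne_zero_iff.mpr hc)).tendsto.comp hf.norm
  have h := (hlog.div_atTop hz).sub (isLittleO_log_id_atTop.tendsto_div_nhds_zero.comp hz)
  rw [sub_zero] at h
  refine h.congr' ?_
  filter_upwards [hz.eventually_gt_atTop 0] with t ht
  rw [norm_mul, norm_exp, Real.log_mul ht.ne' (Real.exp_ne_zero _), Real.log_exp]
  simp only [Function.comp_apply, id]
  ring

lemma tendsto_div_norm_sq_of_tendsto_re_div_norm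
    (hre : Tendsto (fun t ↦ (z t).re / ‖z t‖) l (𝓝 0)) (hz : ∀ᶠ t in l, z t ≠ 0) :
    Tendsto (fun t ↦ (z t / ‖z t‖) ^ 2) l (𝓝 (-1)) := by
  rw [tendsto_iff_norm_sub_tendsto_zero]
  have h := (hre.abs.const_mul 2)
  rw [abs_zero, mul_zero] at h
  refine h.congr' ?_
  filter_upwards [hz] with t ht
  rw [sub_neg_eq_add, div_norm_sq_add_one ht]
  simp [ht, abs_div]

lemma tendsto_abs_im_atTop_of_tendsto_re_div_norm (hz : Tendsto (fun t ↦ ‖z t‖) l atTop)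
    (hre : Tendsto (fun t ↦ (z t).re / ‖z t‖) l (𝓝 0)) :
    Tendsto (fun t ↦ |(z t).im|) l atTop := by
  have h : Tendsto (fun t ↦ 1 - |(z t).re / ‖z t‖|) l (𝓝 1) := by
    simpa using hre.abs.const_sub 1
  refine tendsto_atTop_mono' l ?_ (hz.atTop_mul_pos one_pos h)
  filter_upwards [hz.eventually_gt_atTop 0] with t ht
  rw [abs_div, abs_norm, mul_sub, mul_one, mul_div_cancel₀ _ ht.ne']
  linarith [norm_le_abs_re_add_abs_im (z t)]

lemma tendsto_exp_two_mul_im_mul_I_of_tendsto_mul_exp {c : ℂ} (hc : c ≠ 0)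
    (hz : Tendsto (fun t ↦ ‖z t‖) l atTop)
    (hf : Tendsto (fun t ↦ z t * exp (z t)) l (𝓝 c)) :
    Tendsto (fun t ↦ exp (↑(2 * (z t).im) * I)) l (𝓝 (-(c / ‖c‖) ^ 2)) := by
  have hz_ne : ∀ᶠ t in l, z t ≠ 0 := by
    filter_upwards [hz.eventually_gt_atTop 0] with t ht using norm_pos_iff.mp ht
  -- the sign of `z/‖z‖ → ±i` is not known, hence the squares
  have hsq := tendsto_div_norm_sq_of_tendsto_re_div_norm
    (tendsto_re_div_norm_of_tendsto_mul_exp hc hz hf) hz_ne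
  have hunit : Tendsto (fun t ↦ z t * exp (z t) / ‖z t * exp (z t)‖) l (𝓝 (c / ‖c‖)) :=
    hf.div (continuous_ofReal.tendsto _ |>.comp hf.norm) (by simpa using hc)
  have h := (hunit.pow 2).div hsq (neg_ne_zero.mpr one_ne_zero)
  rw [div_neg, div_one] at h
  refine h.congr' ?_
  filter_upwards [hz_ne] with t ht
  have hu : (z t / ‖z t‖ : ℂ) ≠ 0 := div_ne_zero ht (by simpa using ht)
  rw [Pi.div_apply, mul_exp_div_norm, mul_pow, mul_div_cancel_left₀ _ (pow_ne_zero 2 hu),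
    ← Complex.exp_nat_mul]
  push_cast
  ring_nf

end

lemma not_tendsto_mul_exp {z : ℝ → ℂ} {a b : ℝ} (hab : a < b) (hz : ContinuousOn z (Ioo a b))
    (hz_norm : Tendsto (fun t ↦ ‖z t‖) (𝓝[<] b) atTop) {c : ℂ} (hc : c ≠ 0) :
    ¬ Tendsto (fun t ↦ z t * exp (z t)) (𝓝[<] b) (𝓝 c) := by
  intro hf
  have hy : ContinuousOn (fun t ↦ 2 * (z t).im) (Ioo a b) :=
    continuousOn_const.mul (continuous_im.comp_continuousOn hz)
  have hy_abs : Tendsto (fun t ↦ |2 * (z t).im|) (𝓝[<] b) atTop := by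
    simp only [abs_mul, abs_two]
    exact (tendsto_abs_im_atTop_of_tendsto_re_div_norm hz_norm
      (tendsto_re_div_norm_of_tendsto_mul_exp hc hz_norm hf)).const_mul_atTop two_pos
  exact not_tendsto_exp_mul_I hab hy hy_abs _
    (tendsto_exp_two_mul_im_mul_I_of_tendsto_mul_exp hc hz_norm hf)

/-- the entire function `f(z) = z·exp(z)` has no asymptotic value in
`ℂ \ {0}`: there is no continuous path `γ : [0,1) → ℂ` with `|γ(t)| → ∞` along which
`f ∘ γ` converges to a nonzero complex number. -/
theorem stmt_18 :
    ¬ ∃ (a : ℂ) (γ : ℝ → ℂ), a ≠ 0 ∧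
      ContinuousOn γ (Set.Ico 0 1) ∧
      Filter.Tendsto (fun t => ‖γ t‖) (nhdsWithin 1 (Set.Ico 0 1))
        Filter.atTop ∧
      Filter.Tendsto (fun t => γ t * Complex.exp (γ t)) (nhdsWithin 1 (Set.Ico 0 1))
        (nhds a) := by
  rintro ⟨a, γ, ha, hγ, hγ_norm, hf⟩
  rw [nhdsWithin_Ico_eq_nhdsLT zero_lt_one] at hγ_norm hf
  exact not_tendsto_mul_exp zero_lt_one (hγ.mono Ioo_subset_Ico_self) hγ_norm ha hf
end
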